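/- arXiv:2511.09076 — 7 statements merged into one kernel-verified Lean document; each statement's English description precedes it below -/
import Mathlib

section
/- Fix an angle α ∈ (0, π/2]. Let U_1, …, U_m ∈ ℝ^{n×k} be matrices with orthonormal columns such that for all i ≠ j, the matrix U_iᵀ P_j U_i − cos(α) I_k is singular, where P_j := U_j U_jᵀ. For each i define the polynomial function f_i on symmetric n×n matrices by f_i(X) := det(U_iᵀ X U_i − (cos(α)·tr(X)/k) I_k). Then f_i(P_j) = 0 for i ≠ j and f_i(P_i) = (1 − cos α)^k ≠ 0, so f_1, …, f_m are linearly independent functions. -/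
open Matrix Real

/-- the determinant functions associated to a family of pairwise equiangular
`k`-subspaces (with common angle `α ∈ (0, π/2]`) vanish off the diagonal, are nonzero on the
diagonal, and hence are linearly independent as functions on symmetric matrices. -/
theorem stmt4 (n k m : ℕ) (hk : 0 < k) (α : ℝ) (hα : α ∈ Set.Ioc 0 (π / 2))
    (U : Fin m → Matrix (Fin n) (Fin k) ℝ)
    (horth : ∀ i, (U i)ᵀ * U i = 1)
    (P : Fin m → {X : Matrix (Fin n) (Fin n) ℝ // X.IsSymm})
    (hP : ∀ j, (P j : Matrix (Fin n) (Fin n) ℝ) = U j * (U j)ᵀ)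
    (hsing : ∀ i j, i ≠ j →
      ((U i)ᵀ * (U j * (U j)ᵀ) * U i - Real.cos α • (1 : Matrix (Fin k) (Fin k) ℝ)).det = 0)
    (f : Fin m → ({X : Matrix (Fin n) (Fin n) ℝ // X.IsSymm} → ℝ))
    (hf : f = fun i X =>
      ((U i)ᵀ * X.1 * U i -
        (Real.cos α * Matrix.trace X.1 / k) •
          (1 : Matrix (Fin k) (Fin k) ℝ)).det) :
    (∀ i j, i ≠ j → f i (P j) = 0) ∧ (∀ i, f i (P i) = (1 - Real.cos α) ^ k) ∧
      (1 - Real.cos α) ^ k ≠ 0 ∧ LinearIndependent ℝ f := by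
  have htr : ∀ j, Matrix.trace ((P j : Matrix (Fin n) (Fin n) ℝ)) = (k : ℝ) := by
    intro j
    rw [hP j, Matrix.trace_mul_comm, horth j, Matrix.trace_one]
    simp
  have hcoef : ∀ j, Real.cos α * Matrix.trace ((P j : Matrix (Fin n) (Fin n) ℝ)) / k
      = Real.cos α := by
    intro j
    rw [htr j]
    field_simp
  have hoff : ∀ i j, i ≠ j → f i (P j) = 0 := by
    intro i j hij
    rw [hf]
    simp only
    rw [hcoef j, hP j]
    exact hsing i j hij
  have hdiag : ∀ i, f i (P i) = (1 - Real.cos α) ^ k := by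
    intro i
    rw [hf]
    simp only
    rw [hcoef i, hP i]
    have : (U i)ᵀ * (U i * (U i)ᵀ) * U i = 1 := by
      calc (U i)ᵀ * (U i * (U i)ᵀ) * U i = ((U i)ᵀ * U i) * ((U i)ᵀ * U i) := by
            simp only [Matrix.mul_assoc]
        _ = 1 := by rw [horth i, one_mul]
    rw [this]
    have h1 : (1 : Matrix (Fin k) (Fin k) ℝ) - Real.cos α • 1
        = (1 - Real.cos α) • (1 : Matrix (Fin k) (Fin k) ℝ) := by
      rw [sub_smul, one_smul]
    rw [h1, Matrix.det_smul, Matrix.det_one, mul_one]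
    simp
  have hcos : Real.cos α < 1 := by
    have h0 : 0 < α := hα.1
    have := Real.cos_lt_cos_of_nonneg_of_le_pi le_rfl (by linarith [Real.pi_pos, hα.2]) h0
    simpa using this
  have hne : (1 - Real.cos α) ^ k ≠ 0 := by
    have : 1 - Real.cos α > 0 := by linarith
    positivity
  refine ⟨hoff, hdiag, hne, ?_⟩
  rw [Fintype.linearIndependent_iff]
  intro g hg j
  have := congrFun hg (P j)
  simp only [Finset.sum_apply, Pi.smul_apply, smul_eq_mul, Pi.zero_apply] at this
  rw [Finset.sum_eq_single j] at this
  · rw [hdiag j] at this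
    exact (mul_eq_zero.mp this).resolve_right hne
  · intro i _ hij
    rw [hoff i j hij, mul_zero]
  · intro h; exact absurd (Finset.mem_univ j) h
end

section
/- Let 3 ≤ k ≤ n be integers and let δ be an angle distance on the Grassmannian Gr(k,n) of k-dimensional subspaces of ℝ^n. Then the maximum cardinality of a set of pairwise equiangular k-subspaces with respect to δ is at most C(M_{n+1} + k − 1, k) − M_n · C(M_n − 1, k − 3) − n · C(M_n, k − 3), where M_s := C(s, 2) = s(s−1)/2. -/
open Matrix Real

/-!
Put `Q j = U j (U j)ᵀ - cos²α • 1`. The functions `v i : j ↦ det ((U i)ᵀ Q j U i)` satisfy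
`v i i = sin²ᵏα ≠ 0` and `v i j = 0` for `i ≠ j`, so they are linearly independent. By
Cauchy–Binet each `v i` is a combination of the `k × k` minors `j ↦ det (Q j)[R, R']`, and
since `Q j` is symmetric only the unordered pairs `{R, R'}` of `k`-subsets matter. Hence
`m ≤ C(C(n,k) + 1, 2)`, and this binomial is at most the stated bound.
-/

namespace Nat

theorem choose_two_succ_mul_two (n : ℕ) : (n + 1).choose 2 * 2 = (n + 1) * n := by
  simpa using (add_one_mul_choose_eq n 1).symm

theorem sub_sq_le_succ_mul_choose_two_sub (n : ℕ) {i : ℕ} (hi : 1 ≤ i) :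
    (n - i) ^ 2 ≤ (i + 1) * ((n + 1).choose 2 - i) := by
  rcases le_or_gt n i with hni | hin
  · simp [Nat.sub_eq_zero_of_le hni]
  have hN := choose_two_succ_mul_two n
  have hiN : i ≤ (n + 1).choose 2 := by nlinarith
  zify [hin.le, hiN] at hN ⊢
  nlinarith

theorem descFactorial_sq_le (n : ℕ) {k : ℕ} (hk : 1 ≤ k) :
    n.descFactorial k ^ 2 ≤ 2 * (k ! * ((n + 1).choose 2).descFactorial k) := by
  induction k, hk using Nat.le_induction with
  | base =>
    simp only [descFactorial_one, factorial_one, one_mul]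
    nlinarith [choose_two_succ_mul_two n]
  | succ k hk ih =>
    rw [descFactorial_succ, descFactorial_succ, factorial_succ]
    calc ((n - k) * n.descFactorial k) ^ 2
        = (n - k) ^ 2 * n.descFactorial k ^ 2 := by ring
      _ ≤ ((k + 1) * ((n + 1).choose 2 - k)) * (2 * (k ! * ((n + 1).choose 2).descFactorial k)) :=
        Nat.mul_le_mul (sub_sq_le_succ_mul_choose_two_sub n hk) ih
      _ = _ := by ring

theorem descFactorial_succ_le (n : ℕ) {k : ℕ} (hk : 1 ≤ k) :
    n.descFactorial (k + 1) ≤ (k + 1) * ((n + 1).choose 2).descFactorial k := by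
  have hnN : n ≤ (n + 1).choose 2 := by nlinarith [choose_two_succ_mul_two n]
  induction k, hk using Nat.le_induction with
  | base =>
    simp only [descFactorial_succ, descFactorial_zero, Nat.sub_zero, mul_one]
    nlinarith [choose_two_succ_mul_two n, Nat.mul_le_mul_right n (show n - 1 ≤ n + 1 by omega)]
  | succ k hk ih =>
    rw [descFactorial_succ, descFactorial_succ ((n + 1).choose 2)]
    calc (n - (k + 1)) * n.descFactorial (k + 1)
        ≤ ((n + 1).choose 2 - k) * ((k + 1) * ((n + 1).choose 2).descFactorial k) :=
          Nat.mul_le_mul (by omega) ih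
      _ ≤ (k + 1 + 1) * (((n + 1).choose 2 - k) * ((n + 1).choose 2).descFactorial k) := by
          rw [← mul_assoc, ← mul_assoc, mul_comm (k + 1 + 1)]
          exact Nat.mul_le_mul_right _ (Nat.mul_le_mul_left _ (by omega))

theorem choose_sq_le (n : ℕ) {k : ℕ} (hk : 1 ≤ k) :
    n.choose k ^ 2 ≤ 2 * ((n + 1).choose 2).choose k := by
  have h := descFactorial_sq_le n hk
  rw [descFactorial_eq_factorial_mul_choose, descFactorial_eq_factorial_mul_choose] at h
  refine Nat.le_of_mul_le_mul_left (?_ : k ! ^ 2 * _ ≤ k ! ^ 2 * _) (by positivity)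
  calc k ! ^ 2 * n.choose k ^ 2 = (k ! * n.choose k) ^ 2 := by ring
    _ ≤ _ := h
    _ = _ := by ring

theorem choose_succ_le (n : ℕ) {k : ℕ} (hk : 1 ≤ k) :
    n.choose (k + 1) ≤ ((n + 1).choose 2).choose k := by
  have h := descFactorial_succ_le n hk
  rw [descFactorial_eq_factorial_mul_choose, descFactorial_eq_factorial_mul_choose,
    ← mul_assoc, ← factorial_succ] at h
  exact Nat.le_of_mul_le_mul_left h (factorial_pos _)

theorem choose_two_choose_succ_le (n : ℕ) {k : ℕ} (hk : 1 ≤ k) :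
    (n.choose (k + 1) + 1).choose 2 ≤ ((n + 1).choose 2 + 1).choose (k + 1) := by
  have hsq := choose_sq_le n (k := k + 1) (by omega)
  have hq := choose_succ_le n hk
  have h2 := choose_two_succ_mul_two (n.choose (k + 1))
  rw [choose_succ_succ' ((n + 1).choose 2) k]
  nlinarith

theorem choose_mul_choose_le_add_choose (a b i j : ℕ) :
    a.choose i * b.choose j ≤ (a + b).choose (i + j) := by
  rw [add_choose_eq]
  exact Finset.single_le_sum (f := fun ij : ℕ × ℕ => a.choose ij.1 * b.choose ij.2)
    (fun _ _ => Nat.zero_le _) (a := (i, j)) (Finset.HasAntidiagonal.mem_antidiagonal.2 rfl)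

theorem choose_two_mul_choose_le (n r : ℕ) :
    n.choose 2 * (n.choose 2 - 1).choose r + n * (n.choose 2).choose r
      ≤ ((n + 1).choose 2 + 1).choose (r + 2) := by
  have hN : (n + 1).choose 2 = n.choose 2 + n := by
    simp [choose_succ_succ', add_comm]
  calc n.choose 2 * (n.choose 2 - 1).choose r + n * (n.choose 2).choose r
      ≤ (n.choose 2 + n) * (n.choose 2).choose r := by
        rw [add_mul]
        gcongr
        exact Nat.sub_le _ 1
    _ = (n + 1).choose 2 * (n.choose 2).choose r := by rw [hN]
    _ ≤ (n + 1 + n.choose 2).choose (2 + r) := choose_mul_choose_le_add_choose _ _ _ _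
    _ = ((n + 1).choose 2 + 1).choose (r + 2) := by rw [hN]; ring_nf

theorem choose_two_choose_le (n : ℕ) {k : ℕ} (hk : 3 ≤ k) :
    (n.choose k + 1).choose 2 ≤ ((n + 1).choose 2 + k - 1).choose k
        - n.choose 2 * (n.choose 2 - 1).choose (k - 3)
        - n * (n.choose 2).choose (k - 3) := by
  obtain ⟨r, rfl⟩ : ∃ r, k = r + 3 := ⟨k - 3, by omega⟩
  have hmain : (n.choose (r + 3) + 1).choose 2 ≤ ((n + 1).choose 2 + 1).choose (r + 3) :=
    choose_two_choose_succ_le n (k := r + 2) (by omega)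
  have hcorr := choose_two_mul_choose_le n r
  have hpascal : ((n + 1).choose 2 + 1 + 1).choose (r + 3)
      = ((n + 1).choose 2 + 1).choose (r + 2) + ((n + 1).choose 2 + 1).choose (r + 3) :=
    choose_succ_succ' _ _
  have hmono : ((n + 1).choose 2 + 1 + 1).choose (r + 3)
      ≤ ((n + 1).choose 2 + (r + 3) - 1).choose (r + 3) := Nat.choose_le_choose _ (by omega)
  simp only [Nat.add_sub_cancel]
  omega

end Nat

section Minors

open Finset Equiv Submodule

variable {R : Type*} [CommRing R]

theorem Matrix.det_mul_eq_sum_prod_mul_det_submatrix {κ ι : Type*} [Fintype κ] [DecidableEq κ]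
    [Fintype ι] (A : Matrix κ ι R) (C : Matrix ι κ R) :
    (A * C).det = ∑ p : κ → ι, (∏ i, A i (p i)) * (C.submatrix p id).det := by
  have hprod : ∀ σ : Perm κ, ∏ i, (A * C) i (σ i)
      = ∑ p : κ → ι, (∏ i, A i (p i)) * ∏ i, C (p i) (σ i) := fun σ => by
    simp_rw [mul_apply, Fintype.prod_sum, Finset.prod_mul_distrib]
  rw [← det_transpose (A * C), det_apply']
  simp_rw [transpose_apply, hprod, Finset.mul_sum]
  rw [Finset.sum_comm]
  refine sum_congr rfl fun p _ => ?_
  rw [← det_transpose (C.submatrix p id), det_apply', Finset.mul_sum]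
  refine sum_congr rfl fun σ _ => ?_
  simp only [transpose_apply, submatrix_apply, id_eq]
  ring

theorem Matrix.det_transpose_mul_mul_eq_sum {κ ι : Type*} [Fintype κ] [DecidableEq κ]
    [Fintype ι] (U : Matrix ι κ R) (Q : Matrix ι ι R) :
    (Uᵀ * Q * U).det = ∑ p : κ → ι, ∑ p' : κ → ι,
      ((∏ a, U (p a) a) * ∏ b, U (p' b) b) * (Q.submatrix p p').det := by
  rw [Matrix.mul_assoc, det_mul_eq_sum_prod_mul_det_submatrix]
  refine sum_congr rfl fun p _ => ?_
  have hrows : (Q * U).submatrix p id = Q.submatrix p id * U := by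
    ext; simp [mul_apply]
  rw [hrows, ← det_transpose, transpose_mul,
    det_mul_eq_sum_prod_mul_det_submatrix, Finset.mul_sum]
  refine sum_congr rfl fun p' _ => ?_
  rw [transpose_submatrix, submatrix_submatrix, ← transpose_submatrix, det_transpose]
  simp only [transpose_apply, Function.comp_id, Function.id_comp]
  ring

theorem Matrix.det_submatrix_perm {κ : Type*} [Fintype κ] [DecidableEq κ] (σ τ : Perm κ)
    (M : Matrix κ κ R) : (M.submatrix σ τ).det = Perm.sign σ * Perm.sign τ * M.det := by
  rw [show M.submatrix σ τ = (M.submatrix σ id).submatrix id τ from rfl, det_permute',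
    det_permute, mul_left_comm, mul_assoc]

theorem Function.Injective.exists_eq_orderEmbOfFin_comp {α : Type*} [LinearOrder α] {k : ℕ}
    {p : Fin k → α} (hp : p.Injective) :
    ∃ (s : Finset α) (hs : s.card = k) (σ : Perm (Fin k)), p = s.orderEmbOfFin hs ∘ σ := by
  classical
  have hs : (univ.image p).card = k := by
    rw [card_image_of_injective _ hp, card_univ, Fintype.card_fin]
  have hsorted : StrictMono (p ∘ Tuple.sort p) :=
    (Tuple.monotone_sort p).strictMono_of_injective (hp.comp (Tuple.sort p).injective)
  refine ⟨_, hs, (Tuple.sort p)⁻¹, ?_⟩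
  rw [← orderEmbOfFin_unique hs (fun _ => mem_image_of_mem _ (mem_univ _)) hsorted]
  ext
  simp

variable {α ι : Type*} [LinearOrder α] {k : ℕ}

def sortedMinor (Q : ι → Matrix α α R) (s t : {s : Finset α // s.card = k}) : ι → R :=
  fun j => ((Q j).submatrix (s.1.orderEmbOfFin s.2) (t.1.orderEmbOfFin t.2)).det

theorem sortedMinor_comm {Q : ι → Matrix α α R} (hQ : ∀ j, (Q j).IsSymm)
    (s t : {s : Finset α // s.card = k}) : sortedMinor Q s t = sortedMinor Q t s :=
  funext fun j => by
    rw [sortedMinor, ← det_transpose, transpose_submatrix, (hQ j).eq, sortedMinor]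

theorem minor_mem_span_sortedMinor (Q : ι → Matrix α α R) (p p' : Fin k → α) :
    (fun j => ((Q j).submatrix p p').det) ∈
      span R (Set.range (Function.uncurry (sortedMinor (k := k) Q))) := by
  by_cases hp : p.Injective
  · by_cases hp' : p'.Injective
    · obtain ⟨s, hs, σ, rfl⟩ := hp.exists_eq_orderEmbOfFin_comp
      obtain ⟨t, ht, τ, rfl⟩ := hp'.exists_eq_orderEmbOfFin_comp
      have hperm :
          (fun j => ((Q j).submatrix (s.orderEmbOfFin hs ∘ σ) (t.orderEmbOfFin ht ∘ τ)).det) =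
            ((Perm.sign σ * Perm.sign τ : ℤ) : R) • sortedMinor Q ⟨s, hs⟩ ⟨t, ht⟩ := by
        funext j
        rw [Pi.smul_apply, smul_eq_mul, sortedMinor, ← submatrix_submatrix, det_submatrix_perm]
        push_cast
        rfl
      rw [hperm]
      exact smul_mem _ _ (subset_span ⟨(⟨s, hs⟩, ⟨t, ht⟩), rfl⟩)
    · obtain ⟨a, b, hab, hne⟩ := Function.not_injective_iff.1 hp'
      convert zero_mem (span R _) using 1
      funext j
      exact det_zero_of_column_eq hne fun x => by simp [hab]
  · obtain ⟨a, b, hab, hne⟩ := Function.not_injective_iff.1 hp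
    convert zero_mem (span R _) using 1
    funext j
    exact det_zero_of_row_eq hne (funext fun x => by simp [hab])

theorem det_transpose_mul_mul_mem_span_sortedMinor [Fintype α] (U : Matrix α (Fin k) R)
    (Q : ι → Matrix α α R) :
    (fun j => (Uᵀ * Q j * U).det) ∈
      span R (Set.range (Function.uncurry (sortedMinor (k := k) Q))) := by
  have hsum : (fun j => (Uᵀ * Q j * U).det) = ∑ p : Fin k → α, ∑ p' : Fin k → α,
      ((∏ a, U (p a) a) * ∏ b, U (p' b) b) • fun j => ((Q j).submatrix p p').det := by
    funext j
    simp [det_transpose_mul_mul_eq_sum]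
  rw [hsum]
  exact sum_mem fun p _ => sum_mem fun p' _ => smul_mem _ _ (minor_mem_span_sortedMinor Q p p')

end Minors

theorem finrank_span_range_uncurry_le {R M α : Type*} [Ring R] [StrongRankCondition R]
    [AddCommGroup M] [Module R M] [Fintype α] (f : α → α → M) (hf : ∀ a b, f a b = f b a) :
    (Set.range (Function.uncurry f)).finrank R ≤ (Fintype.card α + 1).choose 2 := by
  have hrange : Set.range (Function.uncurry f) = Set.range (Sym2.lift ⟨f, hf⟩) := by
    ext x
    simp [Sym2.exists]
  rw [hrange, ← Sym2.card]
  exact finrank_range_le_card _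

theorem card_le_finrank_of_diagonal {K ι : Type*} [Field K] [Fintype ι]
    (W : Submodule K (ι → K)) (v : ι → ι → K) (hW : ∀ i, v i ∈ W) (hdiag : ∀ i, v i i ≠ 0)
    (hoff : ∀ i j, i ≠ j → v i j = 0) : Fintype.card ι ≤ Module.finrank K W := by
  classical
  have hv : v = fun i => Pi.single i (v i i) := by
    funext i j
    rcases eq_or_ne j i with rfl | hji
    · simp
    · simp [hji, hoff i j hji.symm]
  have hli : LinearIndependent K v := hv ▸ Pi.linearIndependent_single_of_ne_zero hdiag
  rw [← finrank_span_eq_card hli]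
  exact Submodule.finrank_mono (Submodule.span_le.2 (Set.range_subset_iff.2 hW))

theorem card_le_choose_of_det_eq_zero {K ι : Type*} [Field K] [Fintype ι] {n k : ℕ}
    (U : ι → Matrix (Fin n) (Fin k) K) (horth : ∀ i, (U i)ᵀ * U i = 1) {c : K} (hc : c ≠ 1)
    (hang : ∀ i j, i ≠ j → ((U i)ᵀ * U j * (U j)ᵀ * U i - c • 1).det = 0) :
    Fintype.card ι ≤ (n.choose k + 1).choose 2 := by
  set Q : ι → Matrix (Fin n) (Fin n) K := fun j => U j * (U j)ᵀ - c • 1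
  have hQ : ∀ j, (Q j).IsSymm := fun j => by
    simp [Q, IsSymm, transpose_sub, transpose_mul]
  have hsandwich : ∀ i j, (U i)ᵀ * Q j * U i = (U i)ᵀ * U j * (U j)ᵀ * U i - c • 1 := by
    intro i j
    simp [Q, Matrix.mul_sub, Matrix.sub_mul, horth, Matrix.mul_assoc]
  have hdiag : ∀ i, ((U i)ᵀ * Q i * U i).det ≠ 0 := fun i => by
    have hscalar : (1 : Matrix (Fin k) (Fin k) K) - c • 1 = (1 - c) • 1 := by
      rw [sub_smul, one_smul]
    rw [hsandwich, horth, Matrix.one_mul, horth, hscalar, det_smul, det_one, mul_one]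
    exact pow_ne_zero _ (sub_ne_zero.2 hc.symm)
  calc Fintype.card ι
      ≤ Module.finrank K
          (Submodule.span K (Set.range (Function.uncurry (sortedMinor (k := k) Q)))) :=
        card_le_finrank_of_diagonal _ (fun i j => ((U i)ᵀ * Q j * U i).det)
          (fun i => det_transpose_mul_mul_mem_span_sortedMinor (U i) Q) hdiag
          (fun i j hij => by rw [hsandwich]; exact hang i j hij)
    _ ≤ (Fintype.card {s : Finset (Fin n) // s.card = k} + 1).choose 2 :=
        finrank_span_range_uncurry_le _ (sortedMinor_comm hQ)
    _ = (n.choose k + 1).choose 2 := by rw [Fintype.card_finset_len, Fintype.card_fin]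

theorem stmt6_general (n k m : ℕ) (hk : 3 ≤ k)
    (U : Fin m → Matrix (Fin n) (Fin k) ℝ)
    (horth : ∀ i, (U i)ᵀ * U i = 1)
    (α : ℝ) (hα : α ∈ Set.Ioc 0 (π / 2))
    (hang : ∀ i j, i ≠ j →
      ((U i)ᵀ * U j * (U j)ᵀ * U i - (Real.cos α) ^ 2 • (1 : Matrix (Fin k) (Fin k) ℝ)).det
        = 0) :
    m ≤ ((n + 1).choose 2 + k - 1).choose k
        - n.choose 2 * (n.choose 2 - 1).choose (k - 3)
        - n * (n.choose 2).choose (k - 3) := by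
  have hsin : sin α ≠ 0 :=
    (sin_pos_of_pos_of_lt_pi hα.1 (hα.2.trans_lt (by linarith [pi_pos]))).ne'
  have hcos : cos α ^ 2 ≠ 1 := fun h =>
    hsin (pow_eq_zero_iff two_ne_zero |>.1 (by linarith [sin_sq_add_cos_sq α]))
  calc m = Fintype.card (Fin m) := (Fintype.card_fin m).symm
    _ ≤ (n.choose k + 1).choose 2 := card_le_choose_of_det_eq_zero U horth hcos hang
    _ ≤ _ := Nat.choose_two_choose_le n hk

/-- upper bound for equiangular `k`-subspaces (`3 ≤ k ≤ n`) with respect to an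
angle distance. The family is given by orthonormal basis matrices `U i` spanning pairwise
distinct subspaces (distinct orthogonal projections `U i * (U i)ᵀ`); equiangularity with
common angle `α ∈ (0, π/2]` means that `cos α` is a singular value of `(U i)ᵀ * U j` for all
`i ≠ j`, i.e. `det((U i)ᵀ U j (U j)ᵀ U i − cos²α · I) = 0`. Writing `M s = C(s,2)`, the bound
is `C(M_{n+1} + k − 1, k) − M_n · C(M_n − 1, k − 3) − n · C(M_n, k − 3)`. -/
theorem stmt6 (n k m : ℕ) (hk : 3 ≤ k) (hkn : k ≤ n)
    (U : Fin m → Matrix (Fin n) (Fin k) ℝ)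
    (horth : ∀ i, (U i)ᵀ * U i = 1)
    (hinj : Function.Injective fun i => U i * (U i)ᵀ)
    (α : ℝ) (hα : α ∈ Set.Ioc 0 (π / 2))
    (hang : ∀ i j, i ≠ j →
      ((U i)ᵀ * U j * (U j)ᵀ * U i - (Real.cos α) ^ 2 • (1 : Matrix (Fin k) (Fin k) ℝ)).det
        = 0) :
    m ≤ ((n + 1).choose 2 + k - 1).choose k
        - n.choose 2 * (n.choose 2 - 1).choose (k - 3)
        - n * (n.choose 2).choose (k - 3) :=
  stmt6_general n k m hk U horth α hα hang
end

section
/- Let n ≥ 2 and let δ be an angle distance on Gr(2,n). Then the maximum number of pairwise equiangular 2-dimensional subspaces of ℝ^n with respect to δ is at most C(M + 1, 2) − M, where M = n(n+1)/2. -/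
open Matrix Real


namespace Stmt7Aux

variable {n : ℕ}

abbrev S (n : ℕ) :=
  {X : Matrix (Fin n) (Fin n) ℝ // X.IsSymm ∧ X * X = X ∧ X.trace = 2}

noncomputable def ent (a : Sym2 (Fin n)) (p : S n) : ℝ :=
  Sym2.lift ⟨fun k l => p.val k l, fun k l => p.2.1.apply l k⟩ a

lemma ent_mk (k l : Fin n) (p : S n) : ent s(k, l) p = p.val k l := by
  simp [ent]

noncomputable def G (z : Sym2 (Sym2 (Fin n))) : S n → ℝ :=
  Sym2.lift ⟨fun a b => fun p => ent a p * ent b p,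
    fun _ _ => funext fun _ => mul_comm _ _⟩ z

lemma G_mk (k l k' l' : Fin n) (p : S n) :
    G s(s(k, l), s(k', l')) p = p.val k l * p.val k' l' := by
  simp [G, ent_mk]

noncomputable def T : (Sym2 (Sym2 (Fin n)) → ℝ) →ₗ[ℝ] (S n → ℝ) where
  toFun c := ∑ z, c z • G z
  map_add' c d := by
    simp [add_smul, Finset.sum_add_distrib]
  map_smul' r c := by
    simp [smul_smul, Finset.smul_sum]

/-- coefficient vector for a single monomial -/
noncomputable def e (u v : Sym2 (Fin n)) : Sym2 (Sym2 (Fin n)) → ℝ :=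
  fun z => if z = s(u, v) then 1 else 0

lemma T_e (u v : Sym2 (Fin n)) : T (e u v) = G s(u, v) := by
  simp only [T, LinearMap.coe_mk, AddHom.coe_mk, e, ite_smul, one_smul, zero_smul]
  rw [Finset.sum_ite_eq' Finset.univ (s(u,v))]
  simp

lemma mono_mem (k l k' l' : Fin n) :
    (fun p : S n => p.val k l * p.val k' l') ∈ LinearMap.range T := by
  refine ⟨e s(k, l) s(k', l'), ?_⟩
  rw [T_e]
  funext p
  exact G_mk k l k' l' p

lemma quad_mem (d : Fin n → Fin n → Fin n → Fin n → ℝ) :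
    (fun p : S n => ∑ k, ∑ l, ∑ k', ∑ l', d k l k' l' * (p.val k l * p.val k' l'))
      ∈ LinearMap.range T := by
  have h : (fun p : S n => ∑ k, ∑ l, ∑ k', ∑ l', d k l k' l' * (p.val k l * p.val k' l'))
      = ∑ k, ∑ l, ∑ k', ∑ l', d k l k' l' • (fun p : S n => p.val k l * p.val k' l') := by
    funext p
    simp [Finset.sum_apply]
  rw [h]
  exact Submodule.sum_mem _ fun k _ => Submodule.sum_mem _ fun l _ => Submodule.sum_mem _ fun k' _ =>
    Submodule.sum_mem _ fun l' _ => Submodule.smul_mem _ _ (mono_mem k l k' l')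

end Stmt7Aux

namespace Stmt7Aux

noncomputable def qrel : Sym2 (Fin n) → (Sym2 (Sym2 (Fin n)) → ℝ) :=
  Sym2.lift ⟨fun k l => (∑ mm, e s(mm, mm) s(k, l)) - (2 : ℝ) • ∑ t, e s(k, t) s(t, l), by
    intro k l
    have h1 : ∀ mm : Fin n, e s(mm, mm) s(k, l) = e s(mm, mm) s(l, k) := by
      intro mm; unfold e; rw [show s(l, k) = s(k, l) from Sym2.eq_swap]
    have h2 : (∑ t, e s(k, t) s(t, l)) = ∑ t, e s(l, t) s(t, k) := by
      apply Finset.sum_congr rfl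
      intro t _
      unfold e
      funext z
      congr 1
      rw [show s(s(l,t),s(t,k)) = s(s(t,k),s(l,t)) from Sym2.eq_swap,
        show s(t,k) = s(k,t) from Sym2.eq_swap, show s(l,t) = s(t,l) from Sym2.eq_swap]
    simp only [Finset.sum_congr rfl fun mm _ => h1 mm, h2]⟩

lemma qrel_mk (k l : Fin n) :
    qrel s(k, l) = (∑ mm, e s(mm, mm) s(k, l)) - (2 : ℝ) • ∑ t, e s(k, t) s(t, l) := by
  simp [qrel]

lemma T_qrel (a : Sym2 (Fin n)) : T (qrel a) = 0 := by
  induction a using Sym2.ind with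
  | _ k l =>
    rw [qrel_mk, map_sub, _root_.map_smul, map_sum, map_sum]
    simp only [T_e]
    funext p
    obtain ⟨X, hsym, hidem, htr⟩ := p
    simp only [Pi.sub_apply, Pi.smul_apply, Finset.sum_apply, Pi.zero_apply, G_mk,
      smul_eq_mul]
    have h1 : ∑ mm, X mm mm * X k l = 2 * X k l := by
      rw [← Finset.sum_mul, show (∑ mm, X mm mm) = X.trace from rfl, htr]
    have h2 : ∑ t, X k t * X t l = X k l := by
      rw [show (∑ t, X k t * X t l) = (X * X) k l from (Matrix.mul_apply).symm, hidem]
    rw [h1, h2]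
    ring

end Stmt7Aux

namespace Stmt7Aux

lemma claimA (k l k' l' mm : Fin n) :
    s(s(k, k), s(k, l)) = s(s(mm, mm), s(k', l')) ↔ (mm = k ∧ s(k', l') = s(k, l)) := by
  simp only [Sym2.eq_iff]
  constructor
  · rintro (⟨h1, h2⟩ | ⟨h1, h2⟩) <;> aesop
  · rintro ⟨h1, h2⟩; aesop

lemma claimB (k l k' l' t : Fin n) :
    s(s(k, k), s(k, l)) = s(s(k', t), s(t, l')) ↔ (t = k ∧ s(k', l') = s(k, l)) := by
  simp only [Sym2.eq_iff]
  constructor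
  · rintro (⟨h1, h2⟩ | ⟨h1, h2⟩) <;> aesop
  · rintro ⟨h1, h2⟩; aesop

lemma qrel_eval (k l k' l' : Fin n) :
    qrel s(k', l') s(s(k, k), s(k, l)) = if s(k', l') = s(k, l) then (-1 : ℝ) else 0 := by
  rw [qrel_mk]
  simp only [Pi.sub_apply, Pi.smul_apply, Finset.sum_apply, e, smul_eq_mul]
  rw [Finset.sum_congr rfl (fun mm _ => if_congr (claimA k l k' l' mm) rfl rfl),
      Finset.sum_congr rfl (fun t _ => if_congr (claimB k l k' l' t) rfl rfl)]
  by_cases hP : s(k', l') = s(k, l) <;> simp [hP] <;> norm_num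

lemma qrel_indep :
    LinearIndependent ℝ (qrel : Sym2 (Fin n) → Sym2 (Sym2 (Fin n)) → ℝ) := by
  rw [Fintype.linearIndependent_iff]
  intro g hg a
  induction a using Sym2.ind with
  | _ k l =>
    have h := congrFun hg s(s(k, k), s(k, l))
    simp only [Finset.sum_apply, Pi.smul_apply, smul_eq_mul, Pi.zero_apply] at h
    have h2 : ∀ b : Sym2 (Fin n),
        g b * qrel b s(s(k, k), s(k, l)) = if b = s(k, l) then -g b else 0 := by
      intro b
      induction b using Sym2.ind with
      | _ k'' l'' =>
        rw [qrel_eval k l k'' l'']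
        split_ifs <;> ring
    rw [Finset.sum_congr rfl fun b _ => h2 b] at h
    rw [Finset.sum_ite_eq' Finset.univ (s(k, l)) (fun b => -g b)] at h
    simpa using h

end Stmt7Aux

namespace Stmt7Aux

lemma main_bound {m : ℕ} (F : Fin m → (S n → ℝ))
    (hmem : ∀ i, F i ∈ LinearMap.range (T (n := n)))
    (hind : LinearIndependent ℝ F) :
    m ≤ (n * (n + 1) / 2 + 1).choose 2 - n * (n + 1) / 2 := by
  have hrn := LinearMap.finrank_range_add_finrank_ker (T (n := n))
  -- q family inside the kernel
  have hker : Fintype.card (Sym2 (Fin n)) ≤ Module.finrank ℝ (LinearMap.ker (T (n := n))) := by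
    let q' : Sym2 (Fin n) → LinearMap.ker (T (n := n)) := fun a =>
      ⟨qrel a, by rw [LinearMap.mem_ker]; exact T_qrel a⟩
    have : LinearIndependent ℝ q' := by
      apply LinearIndependent.of_comp (LinearMap.ker (T (n := n))).subtype
      exact qrel_indep
    exact this.fintype_card_le_finrank
  have hrange : m ≤ Module.finrank ℝ (LinearMap.range (T (n := n))) := by
    let F' : Fin m → LinearMap.range (T (n := n)) := fun i => ⟨F i, hmem i⟩
    have : LinearIndependent ℝ F' := by
      apply LinearIndependent.of_comp (LinearMap.range (T (n := n))).subtype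
      exact hind
    simpa using this.fintype_card_le_finrank
  have hcard1 : Fintype.card (Sym2 (Fin n)) = n * (n + 1) / 2 := by
    rw [Sym2.card, Fintype.card_fin, Nat.choose_two_right]
    simp [Nat.mul_comm]
  have hcard2 : Module.finrank ℝ (Sym2 (Sym2 (Fin n)) → ℝ)
      = (n * (n + 1) / 2 + 1).choose 2 := by
    rw [Module.finrank_pi, Sym2.card, hcard1]
  rw [hcard2] at hrn
  apply Nat.le_sub_of_add_le
  calc m + n * (n + 1) / 2
      ≤ Module.finrank ℝ (LinearMap.range (T (n := n)))
        + Module.finrank ℝ (LinearMap.ker (T (n := n))) := by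
        apply Nat.add_le_add hrange
        rw [← hcard1]; exact hker
    _ = (n * (n + 1) / 2 + 1).choose 2 := hrn

end Stmt7Aux

namespace Stmt7Aux
variable {n : ℕ}

lemma det_expand (B : Matrix (Fin 2) (Fin 2) ℝ) (r : ℝ) :
    (B - r • 1).det = B 0 0 * B 1 1 - B 0 1 * B 1 0 - r * (B 0 0 + B 1 1) + r ^ 2 := by
  simp [Matrix.det_fin_two, Matrix.sub_apply, Matrix.smul_apply, Matrix.one_apply]
  ring

lemma entry_expand (V : Matrix (Fin n) (Fin 2) ℝ) (X : Matrix (Fin n) (Fin n) ℝ)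
    (s t : Fin 2) : (Vᵀ * X * V) s t = ∑ k, ∑ l, V k s * X k l * V l t := by
  simp only [Matrix.mul_apply, Matrix.transpose_apply, Finset.sum_mul]
  rw [Finset.sum_comm]

lemma sum_mul_sum4 (f g : Fin n → Fin n → ℝ) :
    (∑ k, ∑ l, f k l) * (∑ k, ∑ l, g k l) = ∑ k, ∑ l, ∑ k', ∑ l', f k l * g k' l' := by
  rw [Finset.sum_mul_sum]
  refine Finset.sum_congr rfl fun k _ => ?_
  calc (∑ k', (∑ l, f k l) * (∑ l', g k' l'))
      = ∑ k', ∑ l, ∑ l', f k l * g k' l' := by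
        refine Finset.sum_congr rfl fun k' _ => ?_
        rw [Finset.sum_mul_sum]
    _ = ∑ l, ∑ k', ∑ l', f k l * g k' l' := Finset.sum_comm

lemma key_identity (V : Matrix (Fin n) (Fin 2) ℝ) (c2 : ℝ) (X : Matrix (Fin n) (Fin n) ℝ)
    (hidem : X * X = X) (htr : X.trace = 2) :
    (Vᵀ * X * V - c2 • 1).det
    = ∑ k, ∑ l, ∑ k', ∑ l',
        (V k 0 * V l 0 * V k' 1 * V l' 1 - V k 0 * V l 1 * V k' 1 * V l' 0
          - c2 * (if k' = l then V k 0 * V l' 0 + V k 1 * V l' 1 else 0)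
          + (c2 ^ 2 / 2) * (if k' = l then if l' = k then (1:ℝ) else 0 else 0))
        * (X k l * X k' l') := by
  have ha : (Vᵀ * X * V) 0 0 * (Vᵀ * X * V) 1 1
      = ∑ k, ∑ l, ∑ k', ∑ l', (V k 0 * V l 0 * V k' 1 * V l' 1) * (X k l * X k' l') := by
    rw [entry_expand, entry_expand, sum_mul_sum4]
    exact Finset.sum_congr rfl fun k _ => Finset.sum_congr rfl fun l _ =>
      Finset.sum_congr rfl fun k' _ => Finset.sum_congr rfl fun l' _ => by ring
  have hb : (Vᵀ * X * V) 0 1 * (Vᵀ * X * V) 1 0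
      = ∑ k, ∑ l, ∑ k', ∑ l', (V k 0 * V l 1 * V k' 1 * V l' 0) * (X k l * X k' l') := by
    rw [entry_expand, entry_expand, sum_mul_sum4]
    exact Finset.sum_congr rfl fun k _ => Finset.sum_congr rfl fun l _ =>
      Finset.sum_congr rfl fun k' _ => Finset.sum_congr rfl fun l' _ => by ring
  have expand_ss : ∀ s : Fin 2, (Vᵀ * (X * X) * V) s s
      = ∑ k, ∑ t, ∑ l, V k s * X k t * X t l * V l s := by
    intro s
    rw [entry_expand]
    refine Finset.sum_congr rfl fun k _ => ?_
    calc (∑ l, V k s * (X * X) k l * V l s)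
        = ∑ l, ∑ t, V k s * X k t * X t l * V l s := by
          refine Finset.sum_congr rfl fun l _ => ?_
          rw [Matrix.mul_apply, Finset.mul_sum, Finset.sum_mul]
          exact Finset.sum_congr rfl fun t _ => by ring
      _ = ∑ t, ∑ l, V k s * X k t * X t l * V l s := Finset.sum_comm
  have hc : c2 * ((Vᵀ * X * V) 0 0 + (Vᵀ * X * V) 1 1)
      = ∑ k, ∑ l, ∑ k', ∑ l',
          (c2 * (if k' = l then V k 0 * V l' 0 + V k 1 * V l' 1 else 0)) * (X k l * X k' l') := by
    have hrhs : ∀ k l : Fin n, (∑ k', ∑ l',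
        (c2 * (if k' = l then V k 0 * V l' 0 + V k 1 * V l' 1 else 0)) * (X k l * X k' l'))
        = ∑ l', c2 * (V k 0 * V l' 0 + V k 1 * V l' 1) * (X k l * X l l') := by
      intro k l
      have step : ∀ k' : Fin n, (∑ l',
          (c2 * (if k' = l then V k 0 * V l' 0 + V k 1 * V l' 1 else 0)) * (X k l * X k' l'))
          = if k' = l then ∑ l', c2 * (V k 0 * V l' 0 + V k 1 * V l' 1) * (X k l * X k' l') else 0 := by
        intro k'
        split_ifs with hcond
        · exact Finset.sum_congr rfl fun l' _ => by ring
        · simp [hcond]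
      rw [Finset.sum_congr rfl fun k' _ => step k', Finset.sum_ite_eq' Finset.univ l]
      simp
    calc c2 * ((Vᵀ * X * V) 0 0 + (Vᵀ * X * V) 1 1)
        = c2 * ((Vᵀ * (X * X) * V) 0 0 + (Vᵀ * (X * X) * V) 1 1) := by rw [hidem]
      _ = ∑ k, ∑ t, ∑ l, c2 * (V k 0 * V l 0 + V k 1 * V l 1) * (X k t * X t l) := by
          rw [expand_ss 0, expand_ss 1]
          rw [mul_add, Finset.mul_sum, Finset.mul_sum, ← Finset.sum_add_distrib]
          refine Finset.sum_congr rfl fun k _ => ?_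
          rw [Finset.mul_sum, Finset.mul_sum, ← Finset.sum_add_distrib]
          refine Finset.sum_congr rfl fun t _ => ?_
          rw [Finset.mul_sum, Finset.mul_sum, ← Finset.sum_add_distrib]
          exact Finset.sum_congr rfl fun l _ => by ring
      _ = ∑ k, ∑ l, ∑ l', c2 * (V k 0 * V l' 0 + V k 1 * V l' 1) * (X k l * X l l') := rfl
      _ = ∑ k, ∑ l, ∑ k', ∑ l',
          (c2 * (if k' = l then V k 0 * V l' 0 + V k 1 * V l' 1 else 0)) * (X k l * X k' l') :=
          Finset.sum_congr rfl fun k _ => Finset.sum_congr rfl fun l _ => (hrhs k l).symm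
  have hd : c2 ^ 2
      = ∑ k, ∑ l, ∑ k', ∑ l',
          ((c2 ^ 2 / 2) * (if k' = l then if l' = k then (1:ℝ) else 0 else 0))
          * (X k l * X k' l') := by
    have hcollapse : ∀ k l : Fin n, (∑ k', ∑ l',
        ((c2 ^ 2 / 2) * (if k' = l then if l' = k then (1:ℝ) else 0 else 0)) * (X k l * X k' l'))
        = (c2 ^ 2 / 2) * (X k l * X l k) := by
      intro k l
      have step : ∀ k' : Fin n, (∑ l',
          ((c2 ^ 2 / 2) * (if k' = l then if l' = k then (1:ℝ) else 0 else 0)) * (X k l * X k' l'))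
          = if k' = l then (c2 ^ 2 / 2) * (X k l * X k' k) else 0 := by
        intro k'
        split_ifs with hcond
        · have h3 : ∀ l' : Fin n, (c2 ^ 2 / 2 * if l' = k then (1:ℝ) else 0) * (X k l * X k' l')
              = if l' = k then c2 ^ 2 / 2 * (X k l * X k' l') else 0 := by
            intro l'; split_ifs <;> ring
          rw [Finset.sum_congr rfl fun l' _ => h3 l', Finset.sum_ite_eq' Finset.univ k]
          simp
        · simp [hcond]
      rw [Finset.sum_congr rfl fun k' _ => step k', Finset.sum_ite_eq' Finset.univ l]
      simp
    rw [Finset.sum_congr rfl fun k (_ : k ∈ Finset.univ) =>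
      Finset.sum_congr rfl fun l (_ : l ∈ Finset.univ) => hcollapse k l]
    have htr2 : (∑ k, ∑ l, X k l * X l k) = 2 := by
      have : (∑ k, ∑ l, X k l * X l k) = (X * X).trace := by
        rw [Matrix.trace]
        exact Finset.sum_congr rfl fun k _ => (Matrix.mul_apply).symm
      rw [this, hidem, htr]
    calc c2 ^ 2 = (c2 ^ 2 / 2) * (∑ k, ∑ l, X k l * X l k) := by rw [htr2]; ring
      _ = ∑ k, ∑ l, (c2 ^ 2 / 2) * (X k l * X l k) := by
          rw [Finset.mul_sum]
          exact Finset.sum_congr rfl fun k _ => Finset.mul_sum _ _ _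
  simp only [sub_mul, add_mul, Finset.sum_sub_distrib, Finset.sum_add_distrib]
  rw [det_expand]
  linear_combination ha - hb - hc + hd

end Stmt7Aux

/-- at most `C(M+1,2) − M` equiangular planes in `ℝⁿ`, where `M = n(n+1)/2`.
Equiangularity with common angle `α ∈ (0, π/2]` with respect to an angle distance means
`cos α` is a singular value of `(U i)ᵀ * U j` for all `i ≠ j`. -/
theorem stmt7 (n m : ℕ) (hn : 2 ≤ n)
    (U : Fin m → Matrix (Fin n) (Fin 2) ℝ)
    (horth : ∀ i, (U i)ᵀ * U i = 1)
    (hinj : Function.Injective fun i => U i * (U i)ᵀ)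
    (α : ℝ) (hα : α ∈ Set.Ioc 0 (π / 2))
    (hang : ∀ i j, i ≠ j →
      ((U i)ᵀ * U j * (U j)ᵀ * U i - (Real.cos α) ^ 2 • (1 : Matrix (Fin 2) (Fin 2) ℝ)).det
        = 0) :
    m ≤ (n * (n + 1) / 2 + 1).choose 2 - n * (n + 1) / 2 := by
  classical
  set c2 : ℝ := (Real.cos α) ^ 2 with hc2
  -- the projections, as elements of S n
  have hPmem : ∀ j, ((U j * (U j)ᵀ).IsSymm ∧ (U j * (U j)ᵀ) * (U j * (U j)ᵀ) = U j * (U j)ᵀ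
      ∧ (U j * (U j)ᵀ).trace = 2) := by
    intro j
    refine ⟨?_, ?_, ?_⟩
    · show (U j * (U j)ᵀ)ᵀ = U j * (U j)ᵀ
      rw [Matrix.transpose_mul, Matrix.transpose_transpose]
    · have h1 : U j * (U j)ᵀ * (U j * (U j)ᵀ) = U j * ((U j)ᵀ * U j) * (U j)ᵀ := by
        simp [Matrix.mul_assoc]
      rw [h1, horth j, Matrix.mul_one]
    · rw [Matrix.trace_mul_comm, horth j, Matrix.trace_one]
      simp
  let Pt : Fin m → Stmt7Aux.S n := fun j => ⟨U j * (U j)ᵀ, hPmem j⟩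
  let F : Fin m → (Stmt7Aux.S n → ℝ) := fun i p => ((U i)ᵀ * p.val * U i - c2 • 1).det
  have hmem : ∀ i, F i ∈ LinearMap.range (Stmt7Aux.T (n := n)) := by
    intro i
    have hFi : F i = fun p : Stmt7Aux.S n => ∑ k, ∑ l, ∑ k', ∑ l',
        (U i k 0 * U i l 0 * U i k' 1 * U i l' 1 - U i k 0 * U i l 1 * U i k' 1 * U i l' 0
          - c2 * (if k' = l then U i k 0 * U i l' 0 + U i k 1 * U i l' 1 else 0)
          + (c2 ^ 2 / 2) * (if k' = l then if l' = k then (1:ℝ) else 0 else 0))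
        * (p.val k l * p.val k' l') := by
      funext p
      exact Stmt7Aux.key_identity (U i) c2 p.val p.2.2.1 p.2.2.2
    rw [hFi]
    exact Stmt7Aux.quad_mem _
  -- (1 - c2) ≠ 0
  have hc2lt : c2 < 1 := by
    have h1 : Real.cos α < 1 := by
      have := Real.cos_lt_cos_of_nonneg_of_le_pi (le_refl 0)
        (le_trans hα.2 (by linarith [Real.pi_pos])) hα.1
      simpa using this
    have h0 : 0 ≤ Real.cos α := by
      apply Real.cos_nonneg_of_mem_Icc
      constructor
      · linarith [hα.1, Real.pi_pos]
      · exact hα.2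
    rw [hc2]; nlinarith
  have hdiag : ∀ j, F j (Pt j) = (1 - c2) ^ 2 := by
    intro j
    show ((U j)ᵀ * (U j * (U j)ᵀ) * U j - c2 • 1).det = (1 - c2) ^ 2
    have h1 : (U j)ᵀ * (U j * (U j)ᵀ) * U j = ((U j)ᵀ * U j) * ((U j)ᵀ * U j) := by
      simp [Matrix.mul_assoc]
    have : (U j)ᵀ * (U j * (U j)ᵀ) * U j = 1 := by
      rw [h1, horth j, Matrix.mul_one]
    rw [this, show (1 : Matrix (Fin 2) (Fin 2) ℝ) - c2 • 1 = (1 - c2) • 1 by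
      rw [sub_smul, one_smul]]
    rw [Matrix.det_smul, Matrix.det_one]
    simp
  have hoff : ∀ i j, i ≠ j → F i (Pt j) = 0 := by
    intro i j hij
    show ((U i)ᵀ * (U j * (U j)ᵀ) * U i - c2 • 1).det = (0:ℝ)
    have : (U i)ᵀ * (U j * (U j)ᵀ) * U i = (U i)ᵀ * U j * (U j)ᵀ * U i := by
      simp [Matrix.mul_assoc]
    rw [this]
    exact hang i j hij
  have hind : LinearIndependent ℝ F := by
    rw [Fintype.linearIndependent_iff]
    intro g hg j
    have h := congrFun hg (Pt j)
    simp only [Finset.sum_apply, Pi.smul_apply, smul_eq_mul, Pi.zero_apply] at h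
    have h2 : ∀ i, g i * F i (Pt j) = if i = j then g i * (1 - c2) ^ 2 else 0 := by
      intro i
      by_cases hij : i = j
      · subst hij; rw [if_pos rfl, hdiag]
      · rw [if_neg hij, hoff i j hij, mul_zero]
    rw [Finset.sum_congr rfl fun i _ => h2 i, Finset.sum_ite_eq' Finset.univ j] at h
    simp only [Finset.mem_univ, if_true] at h
    have hne : (1 - c2) ^ 2 ≠ 0 := pow_ne_zero _ (by linarith)
    exact (mul_eq_zero.mp h).resolve_right hne
  exact Stmt7Aux.main_bound F hmem hind
end

section
/- Let n, s ≥ 1 and let δ be either the chordal distance d_C or the Fubini–Study distance d_FS on the projective space ℙ^{n−1} = Gr(1,n). Then any finite set of lines in ℝ^n whose pairwise distances under δ take at most s distinct values has cardinality at most C(n + 2s − 1, n − 1) + C(n + 2s − 2, n − 1). -/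
open Real
open scoped RealInnerProductSpace

/-!
Both distances are functions of `⟪u, v⟫²`, so at most `s` values `β ≠ 1` occur as `⟪uᵢ, uⱼ⟫²`,
`i ≠ j`; call their set `B`. The form `fᵢ(x) = ∏_{β ∈ B} (⟪x, uᵢ⟫² - β ‖x‖²) · ‖x‖^(2(s - |B|))`
is homogeneous of degree `2s`, vanishes at `uⱼ` for `j ≠ i` and not at `uᵢ`. Hence the `fᵢ`
are linearly independent in the space of degree-`2s` forms in `n` variables, whose dimension
is `C(n + 2s - 1, n - 1)`.
-/

open MvPolynomial

theorem MvPolynomial.finrank_homogeneousSubmodule (σ R : Type*) [Fintype σ] [CommRing R]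
    [Nontrivial R] (k : ℕ) :
    Module.finrank R (homogeneousSubmodule σ R k) = (Fintype.card σ).multichoose k := by
  classical
  let e : {d : σ →₀ ℕ | d.degree = k} ≃ Sym σ k :=
    ((Sym.equivNatSum σ k).trans (Equiv.subtypeEquivRight fun d => by rfl)).symm
  have := Fintype.ofEquiv _ e.symm
  rw [homogeneousSubmodule_eq_finsupp_supported,
    (AddMonoidAlgebra.supportedEquivFinsupp _).finrank_eq, Module.finrank_finsupp_self,
    Fintype.card_congr e, Sym.card_sym_eq_multichoose]

theorem Nat.multichoose_le_choose (n k : ℕ) : n.multichoose k ≤ (n + k - 1).choose (n - 1) := by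
  rcases n with _ | n
  · cases k <;> simp [Nat.multichoose_zero_succ]
  · exact (Nat.multichoose_eq _ _).trans_le (Nat.choose_symm_of_eq_add (by omega)).le

theorem linearIndependent_of_apply_eq_zero_of_ne {ι K M : Type*} [Field K] [AddCommGroup M]
    [Module K M] {v : ι → M} (φ : ι → M →ₗ[K] K) (hdiag : ∀ i, φ i (v i) ≠ 0)
    (hoff : ∀ i j, i ≠ j → φ j (v i) = 0) : LinearIndependent K v := by
  classical
  rw [linearIndependent_iff]
  intro l hl
  ext j
  have := congrArg (φ j) hl
  rw [Finsupp.linearCombination_apply, map_finsuppSum, Finsupp.sum_eq_single j] at this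
  · simpa [hdiag j] using this
  · intro i _ hij; simp [hoff i j hij]
  · simp

theorem Real.sin_arccos_sq {x : ℝ} (hx : |x| ≤ 1) : sin (arccos x) ^ 2 = 1 - x ^ 2 := by
  rw [sin_arccos, sq_sqrt]
  nlinarith [abs_nonneg x, sq_abs x]

namespace EuclideanSpace

variable {σ : Type*} [Fintype σ]

noncomputable def innerPoly (w : EuclideanSpace ℝ σ) : MvPolynomial σ ℝ := ∑ t, C (w t) * X t

noncomputable def normSqPoly : MvPolynomial σ ℝ := ∑ t, X t ^ 2

theorem isHomogeneous_innerPoly (w : EuclideanSpace ℝ σ) : (innerPoly w).IsHomogeneous 1 :=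
  IsHomogeneous.sum _ _ _ fun t _ => (isHomogeneous_C _ _).mul (isHomogeneous_X _ t)

theorem isHomogeneous_normSqPoly : (normSqPoly : MvPolynomial σ ℝ).IsHomogeneous 2 :=
  IsHomogeneous.sum _ _ _ fun t _ => (isHomogeneous_X _ t).pow 2

@[simp]
theorem eval_innerPoly (x w : EuclideanSpace ℝ σ) : eval (⇑x) (innerPoly w) = ⟪x, w⟫ := by
  simp [innerPoly, PiLp.inner_apply, mul_comm]

@[simp]
theorem eval_normSqPoly (x : EuclideanSpace ℝ σ) : eval (⇑x) normSqPoly = ‖x‖ ^ 2 := by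
  simp [normSqPoly, EuclideanSpace.real_norm_sq_eq]

/-- The factor `normSqPoly ^ k` pads the degree without changing the values on the unit sphere. -/
noncomputable def annihilatingPoly (B : Finset ℝ) (k : ℕ) (w : EuclideanSpace ℝ σ) :
    MvPolynomial σ ℝ :=
  (∏ β ∈ B, (innerPoly w ^ 2 - C β * normSqPoly)) * normSqPoly ^ k

theorem isHomogeneous_annihilatingPoly (B : Finset ℝ) (k : ℕ) (w : EuclideanSpace ℝ σ) :
    (annihilatingPoly B k w).IsHomogeneous (2 * (B.card + k)) := by
  have hfactor (β : ℝ) : (innerPoly w ^ 2 - C β * normSqPoly).IsHomogeneous 2 :=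
    ((isHomogeneous_innerPoly w).pow 2).sub ((isHomogeneous_C _ β).mul isHomogeneous_normSqPoly)
  rw [annihilatingPoly, show 2 * (B.card + k) = ∑ _ ∈ B, 2 + 2 * k by
    rw [Finset.sum_const, smul_eq_mul]; ring]
  exact (IsHomogeneous.prod B _ _ fun β _ => hfactor β).mul (isHomogeneous_normSqPoly.pow k)

theorem eval_annihilatingPoly (B : Finset ℝ) (k : ℕ) {x : EuclideanSpace ℝ σ} (hx : ‖x‖ = 1)
    (w : EuclideanSpace ℝ σ) :
    eval (⇑x) (annihilatingPoly B k w) = ∏ β ∈ B, (⟪x, w⟫ ^ 2 - β) := by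
  simp [annihilatingPoly, hx]

theorem card_le_multichoose_of_sq_inner_mem {ι : Type*} [Fintype ι]
    {u : ι → EuclideanSpace ℝ σ} (hu : ∀ i, ‖u i‖ = 1)
    (hlines : ∀ i j, i ≠ j → |⟪u i, u j⟫| ≠ 1) {B : Finset ℝ} {s : ℕ} (hB : B.card ≤ s)
    (hmem : ∀ i j, i ≠ j → ⟪u i, u j⟫ ^ 2 ∈ B) :
    Fintype.card ι ≤ (Fintype.card σ).multichoose (2 * s) := by
  classical
  set B' := B.filter (· ≠ 1)
  have hB' : B'.card ≤ s := (Finset.card_filter_le _ _).trans hB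
  have hmem' : ∀ i j, i ≠ j → ⟪u i, u j⟫ ^ 2 ∈ B' := fun i j hij =>
    Finset.mem_filter.2 ⟨hmem i j hij, by
      rw [← sq_abs, Ne, pow_eq_one_iff_of_nonneg (abs_nonneg _) two_ne_zero]; exact hlines i j hij⟩
  let H := homogeneousSubmodule σ ℝ (2 * s)
  have hdeg : 2 * (B'.card + (s - B'.card)) = 2 * s := by omega
  let P : ι → H := fun i =>
    ⟨annihilatingPoly B' (s - B'.card) (u i), by
      simpa only [H, mem_homogeneousSubmodule, hdeg] using
        isHomogeneous_annihilatingPoly B' (s - B'.card) (u i)⟩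
  let φ : ι → H →ₗ[ℝ] ℝ := fun j => (aeval ⇑(u j)).toLinearMap ∘ₗ H.subtype
  have hφ : ∀ i j, φ j (P i) = ∏ β ∈ B', (⟪u j, u i⟫ ^ 2 - β) := fun i j => by
    simp [φ, P, eval_annihilatingPoly _ _ (hu j)]
  have hP : LinearIndependent ℝ P := by
    refine linearIndependent_of_apply_eq_zero_of_ne φ (fun i => ?_) fun i j hij => ?_
    · have : ⟪u i, u i⟫ = 1 := by simp [hu i]
      rw [hφ, this, one_pow, Finset.prod_ne_zero_iff]
      exact fun β hβ => sub_ne_zero.2 (Finset.mem_filter.1 hβ).2.symm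
    · rw [hφ]
      exact Finset.prod_eq_zero (hmem' j i hij.symm) (sub_self _)
  have : Module.Finite ℝ H := Module.Finite.iff_fg.2 (homogeneousSubmodule_fg σ ℝ _)
  simpa [H, finrank_homogeneousSubmodule] using hP.fintype_card_le_finrank

end EuclideanSpace

theorem stmt8_general (n s m : ℕ)
    (u : Fin m → EuclideanSpace ℝ (Fin n))
    (hunit : ∀ i, ‖u i‖ = 1)
    (hlines : ∀ i j, i ≠ j → |⟪u i, u j⟫| ≠ 1)
    (d : Fin m → Fin m → ℝ)
    (hd : (∀ i j, d i j = Real.sin (Real.arccos |⟪u i, u j⟫|)) ∨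
          (∀ i j, d i j = Real.arccos |⟪u i, u j⟫|))
    (A : Finset ℝ) (hA : A.card ≤ s)
    (hmem : ∀ i j, i ≠ j → d i j ∈ A) :
    m ≤ (n + 2 * s - 1).choose (n - 1) + (n + 2 * s - 2).choose (n - 1) := by
  have hle (i j : Fin m) : |⟪u i, u j⟫| ≤ 1 := by
    simpa [hunit] using abs_real_inner_le_norm (u i) (u j)
  obtain ⟨g, hg⟩ : ∃ g : ℝ → ℝ, ∀ i j, ⟪u i, u j⟫ ^ 2 = g (d i j) := by
    rcases hd with hd | hd
    · refine ⟨fun a => 1 - a ^ 2, fun i j => ?_⟩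
      dsimp only
      rw [hd, sin_arccos_sq ((abs_abs _).trans_le (hle i j)), sq_abs]
      ring
    · refine ⟨fun a => cos a ^ 2, fun i j => ?_⟩
      dsimp only
      rw [hd, cos_arccos ((neg_nonpos.2 zero_le_one).trans (abs_nonneg _)) (hle i j), sq_abs]
  have hcard := EuclideanSpace.card_le_multichoose_of_sq_inner_mem hunit hlines
    (Finset.card_image_le.trans hA) fun i j hij =>
      hg i j ▸ Finset.mem_image_of_mem g (hmem i j hij)
  rw [Fintype.card_fin, Fintype.card_fin] at hcard
  exact (hcard.trans (Nat.multichoose_le_choose n (2 * s))).trans (Nat.le_add_right _ _)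

/-- a set of `m` distinct lines in `ℝⁿ` (given by unit vectors `u i`) whose
pairwise distances under the chordal distance `sin θ` or the Fubini–Study distance `θ`
(`θ = arccos |⟨u,v⟩|`) take at most `s` distinct values satisfies
`m ≤ C(n+2s−1, n−1) + C(n+2s−2, n−1)`. -/
theorem stmt8 (n s m : ℕ) (hn : 1 ≤ n) (hs : 1 ≤ s)
    (u : Fin m → EuclideanSpace ℝ (Fin n))
    (hunit : ∀ i, ‖u i‖ = 1)
    (hlines : ∀ i j, i ≠ j → |⟪u i, u j⟫| ≠ 1)
    (d : Fin m → Fin m → ℝ)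
    (hd : (∀ i j, d i j = Real.sin (Real.arccos |⟪u i, u j⟫|)) ∨
          (∀ i j, d i j = Real.arccos |⟪u i, u j⟫|))
    (A : Finset ℝ) (hA : A.card ≤ s)
    (hmem : ∀ i j, i ≠ j → d i j ∈ A) :
    m ≤ (n + 2 * s - 1).choose (n - 1) + (n + 2 * s - 2).choose (n - 1) :=
  stmt8_general n s m u hunit hlines d hd A hA hmem
end

section
/- Let k ≤ n and s be positive integers, and let S ⊆ Gr(k,n) be a finite set of k-dimensional subspaces of ℝ^n such that the Fubini–Study distances between distinct elements of S take values in {a_1, …, a_s} ⊆ (0, π/2]. For each U ∈ S (with orthonormal basis matrix U ∈ ℝ^{n×k}) define f_U(X) := ∏_{i=1}^s (det(UᵀX)² − cos²(a_i)) for X ∈ ℝ^{n×k} with orthonormal columns. Then the functions {f_U : U ∈ S} are linearly independent, and hence |S| is bounded by the dimension of the space of functions on Gr(k,n) that are restrictions of polynomials of even degree between 2 and 2s in the Plücker coordinates. -/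
open Matrix Real

/-- The Stiefel-type domain: `n × k` matrices with orthonormal columns. -/
def OrthFrame (n k : ℕ) : Type := {X : Matrix (Fin n) (Fin k) ℝ // Xᵀ * X = 1}

/-- The Plücker coordinate of a frame indexed by a `k`-subset `I` of `[n]`
(zero for subsets of the wrong cardinality). -/
noncomputable def pluecker (n k : ℕ) (I : Finset (Fin n)) (X : OrthFrame n k) : ℝ :=
  if h : I.card = k then
    (X.1.submatrix (fun a : Fin k => ((I.orderIsoOfFin h) a : Fin n)) id).det
  else 0

/-- The space of functions on frames that are evaluations of homogeneous polynomials of even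
degree `2d`, `1 ≤ d ≤ s`, in the Plücker coordinates. -/
noncomputable def plueckerSpan (n k s : ℕ) : Submodule ℝ (OrthFrame n k → ℝ) :=
  Submodule.span ℝ {g : OrthFrame n k → ℝ |
    ∃ p : MvPolynomial (Finset (Fin n)) ℝ,
      (∃ d, 1 ≤ d ∧ d ≤ s ∧ p.IsHomogeneous (2 * d)) ∧
      g = fun X => MvPolynomial.eval (fun I => pluecker n k I X) p}

/-!
Evaluating at the frames `U j`: `f i (U j)` vanishes for `i ≠ j`, since `d_FS(U i, U j)` is one
of the `a t`, while `f j (U j) = ∏ₜ sin² (a t) ≠ 0`; so the `f i` are linearly independent.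
By Cauchy–Binet, `det (Uᵀ X)` is a linear form in the Plücker coordinates of `X`, and
`∑_I p_I(X)² = det (Xᵀ X) = 1` on frames. Replacing each constant `cos² (a t)` by
`cos² (a t) · ∑_I p_I²` exhibits `f_U` as a homogeneous polynomial of degree `2s` in the
Plücker coordinates.
-/

section CauchyBinet

open Finset Equiv Function

variable {R ι : Type*} [CommRing R] [Fintype ι] {k : ℕ}

theorem Fintype.sum_eq_sum_orderEmbOfFin_comp_perm [LinearOrder ι] {M : Type*} [AddCommMonoid M]
    (F : (Fin k → ι) → M) (hF : ∀ p, ¬Injective p → F p = 0) :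
    ∑ p, F p = ∑ I : {I : Finset ι // I.card = k}, ∑ σ : Perm (Fin k),
      F (I.1.orderEmbOfFin I.2 ∘ σ) := by
  classical
  rw [← Finset.sum_filter_of_ne (p := Injective) fun p _ h => not_not.1 (mt (hF p) h),
    ← Fintype.sum_sigma' fun (I : {I : Finset ι // I.card = k}) (σ : Perm (Fin k)) =>
      F (I.1.orderEmbOfFin I.2 ∘ σ)]
  symm
  refine Finset.sum_bij (fun x _ => x.1.1.orderEmbOfFin x.1.2 ∘ x.2) ?_ ?_ ?_ fun _ _ => rfl
  · rintro ⟨I, σ⟩ -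
    simpa using (I.1.orderEmbOfFin I.2).injective.comp σ.injective
  · rintro ⟨I, σ⟩ - ⟨J, τ⟩ - h
    have hIJ : I = J := by
      have := congrArg Set.range h
      simp only [EquivLike.range_comp, range_orderEmbOfFin, coe_inj] at this
      exact Subtype.ext this
    subst hIJ
    have hστ : σ = τ := Equiv.ext fun i => (I.1.orderEmbOfFin I.2).injective (congrFun h i)
    rw [hστ]
  · intro p hp
    have hp : Injective p := by simpa using hp
    set I := univ.image p
    have hI : I.card = k := by simp [I, card_image_of_injective _ hp]
    let q : Fin k → Fin k := fun i =>
      (I.orderIsoOfFin hI).symm ⟨p i, mem_image_of_mem p (mem_univ i)⟩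
    have hq : Injective q := fun i j hij =>
      hp (by simpa [q] using congrArg (fun x => (I.orderIsoOfFin hI x : ι)) hij)
    refine ⟨⟨⟨I, hI⟩, .ofBijective q (Finite.injective_iff_bijective.1 hq)⟩, mem_univ _, ?_⟩
    funext i
    simp [q, ← coe_orderIsoOfFin_apply]

theorem Matrix.det_mul_eq_sum_det_submatrix_mul_prod (A : Matrix (Fin k) ι R)
    (B : Matrix ι (Fin k) R) :
    (A * B).det = ∑ p : Fin k → ι, (A.submatrix id p).det * ∏ i, B (p i) i := by
  classical
  simp only [det_apply', mul_apply, prod_univ_sum, Finset.mul_sum, Finset.sum_mul,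
    Fintype.piFinset_univ, submatrix_apply, id, ← Finset.prod_mul_distrib, mul_assoc]
  exact Finset.sum_comm

theorem Matrix.det_mul_eq_sum_det_submatrix_mul_det_submatrix [LinearOrder ι]
    (A : Matrix (Fin k) ι R) (B : Matrix ι (Fin k) R) :
    (A * B).det = ∑ I : {I : Finset ι // I.card = k},
      (A.submatrix id (I.1.orderEmbOfFin I.2)).det *
        (B.submatrix (I.1.orderEmbOfFin I.2) id).det := by
  rw [det_mul_eq_sum_det_submatrix_mul_prod, Fintype.sum_eq_sum_orderEmbOfFin_comp_perm]
  · refine Finset.sum_congr rfl fun I _ => ?_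
    rw [det_apply' (B.submatrix _ id), Finset.mul_sum]
    refine Finset.sum_congr rfl fun σ _ => ?_
    rw [show A.submatrix id (I.1.orderEmbOfFin I.2 ∘ σ) =
      (A.submatrix id (I.1.orderEmbOfFin I.2)).submatrix id σ from rfl, det_permute',
      mul_left_comm, mul_assoc]
    rfl
  · intro p hp
    obtain ⟨i, j, hpij, hij⟩ := not_injective_iff.1 hp
    rw [det_zero_of_column_eq hij fun r => by simp [hpij], zero_mul]

end CauchyBinet

theorem linearIndependent_of_apply_eq_zero_of_ne_s10 {R X ι : Type*} [Ring R] [NoZeroDivisors R]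
    (f : ι → X → R) (x : ι → X) (hdiag : ∀ i, f i (x i) ≠ 0)
    (hoff : ∀ i j, i ≠ j → f i (x j) = 0) : LinearIndependent R f := by
  classical
  refine linearIndependent_iff'.2 fun s c hc j hj => ?_
  have hcj : ∑ i ∈ s, c i * f i (x j) = 0 := by simpa using congrFun hc (x j)
  rw [Finset.sum_eq_single_of_mem j hj fun i _ hij => by rw [hoff i j hij, mul_zero]] at hcj
  exact (mul_eq_zero.1 hcj).resolve_right (hdiag j)

section Pluecker

open MvPolynomial

variable {n k : ℕ}

lemma pluecker_of_card_eq (I : {I : Finset (Fin n) // I.card = k}) (X : OrthFrame n k) :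
    pluecker n k I.1 X = (X.1.submatrix (I.1.orderEmbOfFin I.2) id).det := by
  rw [pluecker, dif_pos I.2]
  rfl

theorem det_transpose_mul_eq_sum_pluecker (Y : Matrix (Fin n) (Fin k) ℝ) (X : OrthFrame n k) :
    (Yᵀ * X.1).det = ∑ I : {I : Finset (Fin n) // I.card = k},
      (Y.submatrix (I.1.orderEmbOfFin I.2) id).det * pluecker n k I.1 X := by
  simp only [det_mul_eq_sum_det_submatrix_mul_det_submatrix, pluecker_of_card_eq,
    ← transpose_submatrix, det_transpose]

theorem sum_pluecker_sq (X : OrthFrame n k) :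
    ∑ I : {I : Finset (Fin n) // I.card = k}, pluecker n k I.1 X ^ 2 = 1 := by
  have h := det_transpose_mul_eq_sum_pluecker X.1 X
  simp only [X.2, det_one, ← pluecker_of_card_eq, ← sq] at h
  exact h.symm

noncomputable def plueckerForm (Y : Matrix (Fin n) (Fin k) ℝ) :
    MvPolynomial (Finset (Fin n)) ℝ :=
  ∑ I : {I : Finset (Fin n) // I.card = k}, C (Y.submatrix (I.1.orderEmbOfFin I.2) id).det * X I.1

noncomputable def plueckerNormSq (n k : ℕ) : MvPolynomial (Finset (Fin n)) ℝ :=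
  ∑ I : {I : Finset (Fin n) // I.card = k}, X I.1 ^ 2

theorem isHomogeneous_plueckerForm (Y : Matrix (Fin n) (Fin k) ℝ) :
    (plueckerForm Y).IsHomogeneous 1 :=
  IsHomogeneous.sum _ _ _ fun _ _ => isHomogeneous_C_mul_X _ _

theorem isHomogeneous_plueckerNormSq : (plueckerNormSq n k).IsHomogeneous 2 :=
  IsHomogeneous.sum _ _ _ fun _ _ => isHomogeneous_X_pow _ _

theorem eval_plueckerForm (Y : Matrix (Fin n) (Fin k) ℝ) (X : OrthFrame n k) :
    eval (fun I => pluecker n k I X) (plueckerForm Y) = (Yᵀ * X.1).det := by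
  simp [plueckerForm, det_transpose_mul_eq_sum_pluecker]

theorem eval_plueckerNormSq (X : OrthFrame n k) :
    eval (fun I => pluecker n k I X) (plueckerNormSq n k) = 1 := by
  simp [plueckerNormSq, sum_pluecker_sq]

theorem prod_det_sq_sub_mem_plueckerSpan {s : ℕ} (hs : 1 ≤ s) (Y : Matrix (Fin n) (Fin k) ℝ)
    (c : Fin s → ℝ) : (fun X : OrthFrame n k => ∏ t, ((Yᵀ * X.1).det ^ 2 - c t)) ∈
      plueckerSpan n k s := by
  refine Submodule.subset_span
    ⟨∏ t, (plueckerForm Y ^ 2 - C (c t) * plueckerNormSq n k), ⟨s, hs, le_rfl, ?_⟩, ?_⟩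
  · have h := IsHomogeneous.prod Finset.univ
      (fun t => plueckerForm Y ^ 2 - C (c t) * plueckerNormSq n k) (fun _ => 2) fun t _ =>
      ((isHomogeneous_plueckerForm Y).pow 2).sub (isHomogeneous_plueckerNormSq.C_mul (c t))
    simpa [mul_comm] using h
  · funext X
    simp [eval_plueckerForm, eval_plueckerNormSq]

noncomputable def plueckerEval (n k : ℕ) :
    MvPolynomial (Finset (Fin n)) ℝ →ₗ[ℝ] (OrthFrame n k → ℝ) :=
  LinearMap.pi fun X => (aeval fun I => pluecker n k I X).toLinearMap

theorem plueckerSpan_le_map_restrictTotalDegree (s : ℕ) : plueckerSpan n k s ≤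
    (restrictTotalDegree (Finset (Fin n)) ℝ (2 * s)).map (plueckerEval n k) := by
  refine Submodule.span_le.2 ?_
  rintro g ⟨p, ⟨d, -, hds, hp⟩, rfl⟩
  refine ⟨p, (mem_restrictTotalDegree _ _ _).2 (hp.totalDegree_le.trans (by omega)), ?_⟩
  funext X
  simp [plueckerEval]

instance (s : ℕ) : FiniteDimensional ℝ (plueckerSpan n k s) :=
  Submodule.finiteDimensional_of_le (plueckerSpan_le_map_restrictTotalDegree s)

end Pluecker

theorem sq_eq_cos_sq_of_arccos_abs_eq {x a : ℝ} (ha : 0 < a) (h : arccos |x| = a) :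
    x ^ 2 = cos a ^ 2 := by
  have hx : |x| ≤ 1 := by
    by_contra! hx
    rw [arccos_eq_zero.2 hx.le] at h
    exact ha.ne h
  rw [← h, cos_arccos (by linarith [abs_nonneg x]) hx, sq_abs]

theorem one_sub_cos_sq_ne_zero {a : ℝ} (h0 : 0 < a) (hπ : a < π) : 1 - cos a ^ 2 ≠ 0 := by
  rw [← sin_sq]
  exact pow_ne_zero 2 (sin_pos_of_pos_of_lt_pi h0 hπ).ne'

theorem stmt10_general (n k s m : ℕ) (hs : 1 ≤ s)
    (U : Fin m → Matrix (Fin n) (Fin k) ℝ)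
    (horth : ∀ i, (U i)ᵀ * U i = 1)
    (a : Fin s → ℝ) (ha : ∀ t, a t ∈ Set.Ioc 0 (π / 2))
    (hFS : ∀ i j, i ≠ j → ∃ t, Real.arccos |((U i)ᵀ * U j).det| = a t)
    (f : Fin m → (OrthFrame n k → ℝ))
    (hf : f = fun i X => ∏ t, (((U i)ᵀ * X.1).det ^ 2 - Real.cos (a t) ^ 2)) :
    LinearIndependent ℝ f ∧ m ≤ Module.finrank ℝ (plueckerSpan n k s) := by
  have hLI : LinearIndependent ℝ f := by
    subst hf
    refine linearIndependent_of_apply_eq_zero_of_ne_s10 _ (fun j => ⟨U j, horth j⟩) (fun i => ?_)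
      fun i j hij => ?_
    · simp only [horth i, det_one, one_pow]
      exact Finset.prod_ne_zero_iff.2 fun t _ =>
        one_sub_cos_sq_ne_zero (ha t).1 ((ha t).2.trans_lt (by linarith [pi_pos]))
    · obtain ⟨t, ht⟩ := hFS i j hij
      refine Finset.prod_eq_zero (Finset.mem_univ t) ?_
      rw [sq_eq_cos_sq_of_arccos_abs_eq (ha t).1 ht, sub_self]
  refine ⟨hLI, ?_⟩
  calc m = Module.finrank ℝ (Submodule.span ℝ (Set.range f)) := by
        rw [finrank_span_eq_card hLI, Fintype.card_fin]
    _ ≤ Module.finrank ℝ (plueckerSpan n k s) :=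
        Submodule.finrank_mono <| Submodule.span_le.2 <| Set.range_subset_iff.2 fun i =>
          hf ▸ prod_det_sq_sub_mem_plueckerSpan hs (U i) _

/-- for an `s`-distance set for the Fubini–Study distance with distance values
`a_1, …, a_s ∈ (0, π/2]`, the functions `f_U(X) = ∏_t (det(UᵀX)² − cos²(a_t))` are linearly
independent, and the cardinality of the set is bounded by the dimension of the space of
functions spanned by polynomials of even degree between `2` and `2s` in Plücker coordinates. -/
theorem stmt10 (n k s m : ℕ) (hk : 1 ≤ k) (hkn : k ≤ n) (hs : 1 ≤ s)
    (U : Fin m → Matrix (Fin n) (Fin k) ℝ)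
    (horth : ∀ i, (U i)ᵀ * U i = 1)
    (hinj : Function.Injective fun i => U i * (U i)ᵀ)
    (a : Fin s → ℝ) (ha : ∀ t, a t ∈ Set.Ioc 0 (π / 2))
    (hFS : ∀ i j, i ≠ j → ∃ t, Real.arccos |((U i)ᵀ * U j).det| = a t)
    (f : Fin m → (OrthFrame n k → ℝ))
    (hf : f = fun i X => ∏ t, (((U i)ᵀ * X.1).det ^ 2 - Real.cos (a t) ^ 2)) :
    LinearIndependent ℝ f ∧ m ≤ Module.finrank ℝ (plueckerSpan n k s) :=
  stmt10_general n k s m hs U horth a ha hFS f hf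
end

section
/- Let n, k, s be positive integers with k ≤ n, and let S ⊆ Gr(k,n) be a finite set of subspaces whose pairwise chordal distances take at most s distinct nonzero values a_1, …, a_s. Then |S| is at most the dimension of the space of polynomial functions of degree ≤ s on the variety of rank-k orthogonal projection matrices, i.e., |S| ≤ dim(ℝ[X]_{≤s} / (ℝ[X]_{≤s} ∩ I_{k,n})), where I_{k,n} = ⟨tr(X) − k, X² − X⟩ ⊆ ℝ[x_{i,j} : 1 ≤ i ≤ j ≤ n]. -/
open Matrix MvPolynomial Real

/-- Index type for the entries `x_{i,j}`, `1 ≤ i ≤ j ≤ n`, of the generic symmetric matrix. -/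
def SymIdx (n : ℕ) : Type := {q : Fin n × Fin n // q.1 ≤ q.2}

/-- The `(i,j)` entry of the generic symmetric matrix, as a polynomial variable. -/
noncomputable def symVar (n : ℕ) (i j : Fin n) : MvPolynomial (SymIdx n) ℝ :=
  if h : i ≤ j then MvPolynomial.X ⟨(i, j), h⟩ else MvPolynomial.X ⟨(j, i), (not_le.mp h).le⟩

/-- The ideal `I_{k,n} = ⟨tr(X) − k, X² − X⟩` of the variety of rank-`k` projections. -/
noncomputable def projIdeal (n k : ℕ) : Ideal (MvPolynomial (SymIdx n) ℝ) :=
  Ideal.span (insert ((∑ l, symVar n l l) - MvPolynomial.C (k : ℝ))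
    {p : MvPolynomial (SymIdx n) ℝ | ∃ i j : Fin n,
      p = (∑ l, symVar n i l * symVar n l j) - symVar n i j})

/-! Each `U` is replaced by the projection `P_U = U Uᵀ`, and `p_U(X) = ∏ₜ (tr(P_U X) + aₜ² − k)`
is a polynomial of degree at most `s` in the entries of a symmetric matrix `X`. Evaluation at
`P_V` kills `I_{k,n}`, vanishes on `p_U` for `U ≠ V` (the factor with `aₜ = d_C(U,V)` is
`aₜ² − d_C(U,V)²`) and equals `∏ₜ aₜ² ≠ 0` on `p_V`, since `tr(P_V²) = tr P_V = k`. Such a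
biorthogonal system makes the classes of the `p_U` linearly independent in the degree-`≤ s` part
of the quotient. -/

section LinearAlgebra

variable {K V ι : Type*} [Field K] [AddCommGroup V] [Module K V]

theorem LinearIndependent.of_pairwise_dual_eq_zero_ne_zero {v : ι → V} (φ : ι → Module.Dual K V)
    (h0 : Pairwise fun i j ↦ φ i (v j) = 0) (h1 : ∀ i, φ i (v i) ≠ 0) :
    LinearIndependent K v :=
  .of_pairwise_dual_eq_zero_one v (fun i ↦ (φ i (v i))⁻¹ • φ i)
    (fun i j hij ↦ by simp [h0 hij]) (fun i ↦ by simp [h1 i])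

theorem card_le_finrank_map_mkQ [Fintype ι] {I N : Submodule K V} [Module.Finite K N] {v : ι → V}
    (hv : ∀ i, v i ∈ N) (φ : ι → Module.Dual K V) (hI : ∀ i, I ≤ LinearMap.ker (φ i))
    (h0 : Pairwise fun i j ↦ φ i (v j) = 0) (h1 : ∀ i, φ i (v i) ≠ 0) :
    Fintype.card ι ≤ Module.finrank K (N.map I.mkQ) := by
  let w : ι → N.map I.mkQ := fun i ↦ ⟨I.mkQ (v i), Submodule.mem_map_of_mem (hv i)⟩
  let ψ : ι → Module.Dual K (N.map I.mkQ) := fun i ↦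
    (I.liftQ (φ i) (hI i)).comp (N.map I.mkQ).subtype
  exact (LinearIndependent.of_pairwise_dual_eq_zero_ne_zero ψ h0 h1 :
    LinearIndependent K w).fintype_card_le_finrank

end LinearAlgebra

section Projection

variable {R m r : Type*} [CommSemiring R] [Fintype r] {U : Matrix m r R}

theorem isSymm_mul_transpose (U : Matrix m r R) : (U * Uᵀ).IsSymm := by
  simp [Matrix.IsSymm, transpose_mul]

theorem isIdempotentElem_mul_transpose [Fintype m] [DecidableEq r] (hU : Uᵀ * U = 1) :
    IsIdempotentElem (U * Uᵀ) := by
  rw [IsIdempotentElem, Matrix.mul_assoc, ← Matrix.mul_assoc Uᵀ, hU, Matrix.one_mul]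

theorem trace_mul_transpose [Fintype m] [DecidableEq r] (hU : Uᵀ * U = 1) :
    trace (U * Uᵀ) = Fintype.card r := by
  rw [trace_mul_comm, hU, trace_one]

end Projection

instance (n : ℕ) : Finite (SymIdx n) := Subtype.finite

section Polynomials

variable {n : ℕ}

/-- Reads only the entries `A i j` with `i ≤ j`, so this is evaluation at `A` only when `A` is
symmetric. -/
noncomputable def evalSym (A : Matrix (Fin n) (Fin n) ℝ) : MvPolynomial (SymIdx n) ℝ →ₐ[ℝ] ℝ :=
  aeval fun q ↦ A q.1.1 q.1.2

theorem evalSym_symVar {A : Matrix (Fin n) (Fin n) ℝ} (hA : A.IsSymm) (i j : Fin n) :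
    evalSym A (symVar n i j) = A i j := by
  unfold symVar evalSym
  split_ifs
  · exact aeval_X _ _
  · exact (aeval_X _ _).trans (hA.apply i j)

theorem totalDegree_symVar_le (i j : Fin n) : (symVar n i j).totalDegree ≤ 1 := by
  unfold symVar
  split_ifs <;> exact (totalDegree_X _).le

theorem projIdeal_le_ker_evalSym {k : ℕ} {A : Matrix (Fin n) (Fin n) ℝ} (hA : A.IsSymm)
    (hAA : IsIdempotentElem A) (htr : A.trace = k) : projIdeal n k ≤ RingHom.ker (evalSym A) := by
  rw [projIdeal, Ideal.span_le]
  rintro q (rfl | ⟨i, j, rfl⟩) <;>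
    simp only [SetLike.mem_coe, RingHom.mem_ker, map_sub, map_sum, _root_.map_mul, algHom_C,
      evalSym_symVar hA, sub_eq_zero]
  · exact htr
  · rw [← mul_apply, hAA.eq]

noncomputable def traceForm (A : Matrix (Fin n) (Fin n) ℝ) : MvPolynomial (SymIdx n) ℝ :=
  ∑ i, ∑ j, A i j • symVar n j i

theorem totalDegree_traceForm_le (A : Matrix (Fin n) (Fin n) ℝ) : (traceForm A).totalDegree ≤ 1 :=
  (totalDegree_finsetSum _ _).trans <| Finset.sup_le fun i _ ↦
    (totalDegree_finsetSum _ _).trans <| Finset.sup_le fun j _ ↦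
      (totalDegree_smul_le _ _).trans (totalDegree_symVar_le j i)

theorem evalSym_traceForm {A B : Matrix (Fin n) (Fin n) ℝ} (hB : B.IsSymm) :
    evalSym B (traceForm A) = trace (A * B) := by
  simp [traceForm, evalSym_symVar hB, trace, mul_apply]

noncomputable def chordalPoly (k : ℕ) {s : ℕ} (A : Matrix (Fin n) (Fin n) ℝ) (a : Fin s → ℝ) :
    MvPolynomial (SymIdx n) ℝ :=
  ∏ t, (traceForm A + C (a t ^ 2 - k))

theorem totalDegree_chordalPoly_le (k : ℕ) {s : ℕ} (A : Matrix (Fin n) (Fin n) ℝ)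
    (a : Fin s → ℝ) : (chordalPoly k A a).totalDegree ≤ s := by
  refine (totalDegree_finsetProd _ _).trans ?_
  have h : ∀ t, (traceForm A + C (a t ^ 2 - k)).totalDegree ≤ 1 := fun t ↦
    (totalDegree_add _ _).trans <|
      max_le (totalDegree_traceForm_le A) (by rw [totalDegree_C]; exact zero_le_one)
  simpa using Finset.sum_le_sum fun t (_ : t ∈ Finset.univ) ↦ h t

theorem evalSym_chordalPoly (k : ℕ) {s : ℕ} {A B : Matrix (Fin n) (Fin n) ℝ} (hB : B.IsSymm)
    (a : Fin s → ℝ) :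
    evalSym B (chordalPoly k A a) = ∏ t, (trace (A * B) + (a t ^ 2 - k)) := by
  simp [chordalPoly, evalSym_traceForm hB]

end Polynomials

theorem stmt16_general (n k s m : ℕ)
    (U : Fin m → Matrix (Fin n) (Fin k) ℝ)
    (horth : ∀ i, (U i)ᵀ * U i = 1)
    (a : Fin s → ℝ) (ha : ∀ t, a t ≠ 0)
    (hdist : ∀ i j, i ≠ j → ∃ t,
      Real.sqrt ((k : ℝ) -
        Matrix.trace ((U i * (U i)ᵀ) * (U j * (U j)ᵀ))) = a t) :
    m ≤ Module.finrank ℝ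
      (Submodule.map ((projIdeal n k).restrictScalars ℝ).mkQ
        (MvPolynomial.restrictTotalDegree (SymIdx n) ℝ s)) := by
  set P : Fin m → Matrix (Fin n) (Fin n) ℝ := fun i ↦ U i * (U i)ᵀ
  have hP : ∀ i, (P i).IsSymm := fun i ↦ isSymm_mul_transpose (U i)
  have hPP : ∀ i, IsIdempotentElem (P i) := fun i ↦ isIdempotentElem_mul_transpose (horth i)
  have htr : ∀ i, (P i).trace = k := fun i ↦ by simp [P, trace_mul_transpose (horth i)]
  have hoff : Pairwise fun j i ↦ evalSym (P j) (chordalPoly k (P i) a) = 0 := by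
    intro j i hji
    obtain ⟨t, ht⟩ := hdist i j hji.symm
    obtain ⟨hsq, -⟩ | ⟨-, hzero⟩ := Real.sqrt_eq_cases.mp ht
    · rw [evalSym_chordalPoly k (hP j)]
      exact Finset.prod_eq_zero (Finset.mem_univ t) (by linear_combination hsq)
    · exact absurd hzero (ha t)
  have hdiag : ∀ i, evalSym (P i) (chordalPoly k (P i) a) ≠ 0 := by
    intro i
    rw [evalSym_chordalPoly k (hP i), (hPP i).eq, htr]
    exact Finset.prod_ne_zero_iff.mpr fun t _ ↦ by simpa using pow_ne_zero 2 (ha t)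
  simpa using card_le_finrank_map_mkQ (v := fun i ↦ chordalPoly k (P i) a)
    (fun i ↦ (mem_restrictTotalDegree _ _ _).mpr (totalDegree_chordalPoly_le k (P i) a))
    (fun j ↦ (evalSym (P j)).toLinearMap)
    (fun j x hx ↦ projIdeal_le_ker_evalSym (hP j) (hPP j) (htr j) hx) hoff hdiag

/-- a set of `k`-subspaces whose pairwise chordal distances take at most `s`
distinct nonzero values `a_1, …, a_s` has cardinality at most
`dim(ℝ[X]_{≤s} / (ℝ[X]_{≤s} ∩ I_{k,n}))`, realized as the image of the polynomials of total
degree at most `s` in the quotient by `I_{k,n}`. -/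
theorem stmt16 (n k s m : ℕ) (hk : 1 ≤ k) (hkn : k ≤ n) (hs : 1 ≤ s)
    (U : Fin m → Matrix (Fin n) (Fin k) ℝ)
    (horth : ∀ i, (U i)ᵀ * U i = 1)
    (hinj : Function.Injective fun i => U i * (U i)ᵀ)
    (a : Fin s → ℝ) (ha : ∀ t, a t ≠ 0)
    (hdist : ∀ i j, i ≠ j → ∃ t,
      Real.sqrt ((k : ℝ) -
        Matrix.trace ((U i * (U i)ᵀ) * (U j * (U j)ᵀ))) = a t) :
    m ≤ Module.finrank ℝ
      (Submodule.map ((projIdeal n k).restrictScalars ℝ).mkQ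
        (MvPolynomial.restrictTotalDegree (SymIdx n) ℝ s)) :=
  stmt16_general n k s m U horth a ha hdist
end

section
/- For any unit vectors u_1, …, u_m ∈ ℝ^n spanning pairwise distinct lines, if there is a single value α ∈ (0, π/2] such that the angle between every pair of distinct lines span(u_i), span(u_j) equals α, then the Gram-type matrix G with G_{ij} = ⟨u_i, u_j⟩² satisfies G_{ii} = 1 and G_{ij} = cos²α for i ≠ j, so G = (1 − cos²α) I_m + cos²α J_m where J_m is the all-ones matrix; moreover G = (tr(P_i P_j))_{i,j} where P_i = u_i u_iᵀ, and since each P_i lies in the C(n+1,2)-dimensional space of symmetric matrices, rank(G) ≤ C(n+1, 2). Since α ≤ π/2 implies cos²α < 1, G is nonsingular, giving m ≤ C(n+1,2). -/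
open Matrix Real
open scoped RealInnerProductSpace

/-!
The squared inner products `⟪u i, u j⟫ ^ 2` are the trace pairings `tr (P i * P j)` of the
rank-one projections `P i = u i u iᵀ`. Flattening the symmetric matrices `P i` into rows indexed
by `Fin n × Fin n` writes `G = A * Aᵀ`, and `A` factors through the `C(n+1, 2)` unordered pairs
`Sym2 (Fin n)`, which bounds the rank of `G`. Equiangularity makes `G = (1 - c) • 1 + c • J` with
`c = cos α ^ 2 < 1`, a positive definite matrix, so `rank G = m`.
-/

theorem Matrix.rank_le_choose_of_symmetric {ι α R : Type*} [Fintype α] [DecidableEq α]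
    [CommSemiring R] [StrongRankCondition R] (A : Matrix ι (α × α) R)
    (hA : ∀ i a b, A i (a, b) = A i (b, a)) :
    A.rank ≤ (Fintype.card α + 1).choose 2 := by
  let C : Matrix ι (Sym2 α) R := of fun i => Sym2.lift ⟨fun a b => A i (a, b), hA i⟩
  let D : Matrix (Sym2 α) (α × α) R := of fun s p => if s = s(p.1, p.2) then 1 else 0
  have hCD : A = C * D := by
    ext i ⟨a, b⟩
    simp [C, D, mul_apply]
  calc A.rank = (C * D).rank := by rw [← hCD]
    _ ≤ C.rank := rank_mul_le_left C D
    _ ≤ Fintype.card (Sym2 α) := rank_le_card_width C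
    _ = (Fintype.card α + 1).choose 2 := Sym2.card

theorem Matrix.trace_mul_eq_sum_mul_of_isSymm {α R : Type*} [Fintype α] [CommSemiring R]
    (M N : Matrix α α R) (hN : N.IsSymm) :
    trace (M * N) = ∑ p : α × α, M p.1 p.2 * N p.1 p.2 := by
  simp_rw [trace, diag, mul_apply, Fintype.sum_prod_type]
  exact Finset.sum_congr rfl fun a _ => Finset.sum_congr rfl fun b _ => by rw [hN.apply a b]

theorem Matrix.rank_trace_mul_le_choose {ι α R : Type*} [Fintype ι] [Fintype α] [DecidableEq α]
    [CommSemiring R] [StrongRankCondition R] (P : ι → Matrix α α R) (hP : ∀ i, (P i).IsSymm) :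
    (of fun i j => trace (P i * P j)).rank ≤ (Fintype.card α + 1).choose 2 := by
  let A : Matrix ι (α × α) R := of fun i p => P i p.1 p.2
  have hgram : (of fun i j => trace (P i * P j)) = A * Aᵀ := by
    ext i j
    simp [A, mul_apply, trace_mul_eq_sum_mul_of_isSymm _ _ (hP j)]
  rw [hgram]
  exact (rank_mul_le_left A Aᵀ).trans
    (rank_le_choose_of_symmetric A fun i a b => ((hP i).apply a b).symm)

theorem Matrix.posDef_smul_one_add_smul_allOnes {ι : Type*} [Fintype ι] [DecidableEq ι]
    {a b : ℝ} (ha : 0 < a) (hb : 0 ≤ b) :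
    (a • (1 : Matrix ι ι ℝ) + b • of fun _ _ => (1 : ℝ)).PosDef := by
  have hJ : (of fun _ _ => (1 : ℝ) : Matrix ι ι ℝ) = vecMulVec 1 (star 1) := by
    ext
    simp [vecMulVec_apply]
  rw [hJ]
  exact (PosDef.one.smul ha).add_posSemidef ((posSemidef_vecMulVec_self_star 1).smul hb)

theorem Matrix.trace_vecMulVec_self_mul_vecMulVec_self {α R : Type*} [Fintype α] [CommSemiring R]
    (x y : α → R) :
    trace (vecMulVec x x * vecMulVec y y) = (x ⬝ᵥ y) ^ 2 := by
  rw [vecMulVec_mul_vecMulVec, trace_vecMulVec, dotProduct_smul, smul_eq_mul, sq]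

theorem EuclideanSpace.sq_inner_eq_cos_sq_of_arccos_abs_inner_eq {ι : Type*} [Fintype ι]
    {x y : EuclideanSpace ℝ ι} (hx : ‖x‖ = 1) (hy : ‖y‖ = 1) {α : ℝ}
    (h : arccos |⟪x, y⟫| = α) :
    ⟪x, y⟫ ^ 2 = cos α ^ 2 := by
  have hle : |⟪x, y⟫| ≤ 1 := by simpa [hx, hy] using abs_real_inner_le_norm x y
  rw [← h, cos_arccos (by linarith [abs_nonneg ⟪x, y⟫]) hle, sq_abs]

theorem Real.cos_sq_lt_one_of_mem_Ioo {α : ℝ} (h : α ∈ Set.Ioo 0 π) : cos α ^ 2 < 1 := by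
  have := sin_pos_of_pos_of_lt_pi h.1 h.2
  rw [cos_sq']
  nlinarith

theorem stmt17_general (n m : ℕ) (u : Fin m → EuclideanSpace ℝ (Fin n))
    (hunit : ∀ i, ‖u i‖ = 1)
    (α : ℝ) (hα : α ∈ Set.Ioc 0 (π / 2))
    (hang : ∀ i j, i ≠ j → Real.arccos |⟪u i, u j⟫| = α)
    (G : Matrix (Fin m) (Fin m) ℝ) (hG : G = fun i j => ⟪u i, u j⟫ ^ 2)
    (P : Fin m → Matrix (Fin n) (Fin n) ℝ)
    (hP : P = fun i => Matrix.of fun a b => u i a * u i b) :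
    G = (1 - Real.cos α ^ 2) • (1 : Matrix (Fin m) (Fin m) ℝ) +
        Real.cos α ^ 2 • Matrix.of (fun _ _ => (1 : ℝ)) ∧
    (∀ i j, G i j = Matrix.trace (P i * P j)) ∧
    G.rank ≤ (n + 1).choose 2 ∧
    IsUnit G ∧
    m ≤ (n + 1).choose 2 := by
  have hPu : ∀ i, P i = vecMulVec (u i) (u i) := by subst hP; exact fun i => rfl
  have hcos : cos α ^ 2 < 1 :=
    cos_sq_lt_one_of_mem_Ioo ⟨hα.1, hα.2.trans_lt (half_lt_self pi_pos)⟩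
  have hGform : G = (1 - cos α ^ 2) • (1 : Matrix (Fin m) (Fin m) ℝ) +
      cos α ^ 2 • of fun _ _ => (1 : ℝ) := by
    subst hG
    ext i j
    rcases eq_or_ne i j with rfl | hij
    · simp [hunit i]
    · simp [hij, EuclideanSpace.sq_inner_eq_cos_sq_of_arccos_abs_inner_eq (hunit i) (hunit j)
        (hang i j hij)]
  have htrace : ∀ i j, G i j = trace (P i * P j) := by
    intro i j
    rw [hPu, hPu, trace_vecMulVec_self_mul_vecMulVec_self, hG, dotProduct_comm]
    rfl
  have hrank : G.rank ≤ (n + 1).choose 2 := by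
    rw [show G = of fun i j => trace (P i * P j) from ext htrace]
    simpa using rank_trace_mul_le_choose P fun i => (hPu i).symm ▸ transpose_vecMulVec _ _
  have hGunit : IsUnit G :=
    hGform ▸ (posDef_smul_one_add_smul_allOnes (sub_pos.2 hcos) (sq_nonneg _)).isUnit
  refine ⟨hGform, htrace, hrank, hGunit, ?_⟩
  simpa [rank_of_isUnit G hGunit] using hrank

/-- for unit vectors spanning pairwise distinct equiangular lines with common
angle `α ∈ (0, π/2]`, the matrix `G` of squared inner products equals
`(1 − cos²α) I + cos²α J`, coincides with `(tr(P_i P_j))` for the projections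
`P_i = u_i u_iᵀ`, has rank at most `C(n+1,2)`, is nonsingular, and hence `m ≤ C(n+1,2)`. -/
theorem stmt17 (n m : ℕ) (u : Fin m → EuclideanSpace ℝ (Fin n))
    (hunit : ∀ i, ‖u i‖ = 1)
    (hlines : ∀ i j, i ≠ j → |⟪u i, u j⟫| ≠ 1)
    (α : ℝ) (hα : α ∈ Set.Ioc 0 (π / 2))
    (hang : ∀ i j, i ≠ j → Real.arccos |⟪u i, u j⟫| = α)
    (G : Matrix (Fin m) (Fin m) ℝ) (hG : G = fun i j => ⟪u i, u j⟫ ^ 2)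
    (P : Fin m → Matrix (Fin n) (Fin n) ℝ)
    (hP : P = fun i => Matrix.of fun a b => u i a * u i b) :
    G = (1 - Real.cos α ^ 2) • (1 : Matrix (Fin m) (Fin m) ℝ) +
        Real.cos α ^ 2 • Matrix.of (fun _ _ => (1 : ℝ)) ∧
    (∀ i j, G i j = Matrix.trace (P i * P j)) ∧
    G.rank ≤ (n + 1).choose 2 ∧
    IsUnit G ∧
    m ≤ (n + 1).choose 2 :=
  stmt17_general n m u hunit α hα hang G hG P hP
end
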